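/- arXiv:1909.04482 — 6 statements merged into one kernel-verified Lean document; each statement's English description precedes it below -/
import Mathlib

section
/- Let X be a binomial random variable with parameters n-k trials and success probability (k+1)/n, where n and k are integers with 0 ≤ k ≤ n/3 and k ≥ 6. Then the probability that X < (k+1)/6 is at most 8/21. -/
private lemma star_cheb_aux (μ a : ℝ) (h4 : 4 * a ≤ μ) (ha : 7/6 ≤ a) (hμ0 : 0 ≤ μ) :
    21 * μ ≤ 8 * (μ - a)^2 := by
  nlinarith [mul_nonneg (by linarith : (0:ℝ) ≤ μ - 4*a) (by linarith : (0:ℝ) ≤ 4*μ - a),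
    mul_nonneg (by linarith : (0:ℝ) ≤ a - 7/6) hμ0]

/-- Chebyshev step for star propagation: if `X ~ Bin(n-k, (k+1)/n)` with `6 ≤ k` and
`k ≤ n/3`, then `P(X < (k+1)/6) ≤ 8/21`. -/
theorem star_low_increase_chebyshev (n k : ℕ) (hk6 : 6 ≤ k) (hk : 3 * k ≤ n) :
    ∑ i ∈ (Finset.range (n - k + 1)).filter (fun i => 6 * i < k + 1),
        (Nat.choose (n - k) i : ℝ) * (((k : ℝ) + 1) / n) ^ i *
          (1 - ((k : ℝ) + 1) / n) ^ (n - k - i) ≤ 8 / 21 := by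
  set m := n - k with hm
  set p : ℝ := ((k : ℝ) + 1) / n with hp
  have hn18 : (18 : ℕ) ≤ n := le_trans (by omega) hk
  have hnpos : (0 : ℝ) < n := by positivity
  have hkn : k ≤ n := by omega
  have hkr : (7 : ℝ) ≤ (k : ℝ) + 1 := by
    have : (6 : ℝ) ≤ (k : ℝ) := by exact_mod_cast hk6
    linarith
  have hkn3 : 3 * (k : ℝ) ≤ n := by exact_mod_cast hk
  have hp0 : 0 ≤ p := by
    apply div_nonneg _ hnpos.le; positivity
  have hp1 : p ≤ 1 := by
    rw [hp, div_le_one hnpos]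
    have : (k : ℝ) + 1 ≤ 3 * k := by linarith
    linarith
  have hmr : ((m : ℝ)) = (n : ℝ) - k := by
    rw [hm]; push_cast [Nat.cast_sub hkn]; ring
  set μ : ℝ := (m : ℝ) * p with hμ
  set a : ℝ := ((k : ℝ) + 1) / 6 with ha
  -- mean bound: μ ≥ 4a = 2(k+1)/3
  have hμ4a : 4 * a ≤ μ := by
    rw [hμ, ha, hmr, hp]
    have h1 : 2 * (n : ℝ) / 3 ≤ (n : ℝ) - k := by linarith
    have h2 : (2 * (n : ℝ) / 3) * (((k:ℝ)+1) / n) ≤ ((n:ℝ) - k) * (((k:ℝ)+1)/n) := by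
      apply mul_le_mul_of_nonneg_right h1
      positivity
    calc 4 * (((k:ℝ)+1)/6) = (2 * (n : ℝ) / 3) * (((k:ℝ)+1) / n) := by
          field_simp; ring
      _ ≤ _ := h2
  have hapos : 0 < a := by rw [ha]; linarith
  set t : ℝ := μ - a with ht
  have htpos : 0 < t := by rw [ht]; nlinarith
  -- variance identity from Bernstein polynomials
  have hvar : ∑ ν ∈ Finset.range (m+1), (μ - ν)^2 *
      ((m.choose ν : ℝ) * p^ν * (1-p)^(m-ν)) = (m : ℝ) * p * (1-p) := by
    have h := congrArg (Polynomial.eval p) (bernsteinPolynomial.variance (R := ℝ) m)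
    simpa [bernsteinPolynomial, Polynomial.eval_finset_sum, nsmul_eq_mul, hμ] using h
  clear_value μ a t
  have hw : ∀ ν, 0 ≤ (m.choose ν : ℝ) * p^ν * (1-p)^(m-ν) := by
    intro ν
    have : (0:ℝ) ≤ 1 - p := by linarith
    positivity
  -- Chebyshev chain
  have step1 : ∑ i ∈ (Finset.range (m + 1)).filter (fun i => 6 * i < k + 1),
      (m.choose i : ℝ) * p ^ i * (1 - p) ^ (m - i)
      ≤ ∑ i ∈ (Finset.range (m + 1)).filter (fun i => 6 * i < k + 1),
        (1 / t^2) * ((μ - i)^2 * ((m.choose i : ℝ) * p ^ i * (1 - p) ^ (m - i))) := by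
    apply Finset.sum_le_sum
    intro i hi
    have hif : 6 * i < k + 1 := (Finset.mem_filter.mp hi).2
    have hia : (i : ℝ) < a := by
      rw [ha, lt_div_iff₀ (by norm_num : (0:ℝ) < 6)]
      have : (6 * i : ℝ) < (k : ℝ) + 1 := by exact_mod_cast hif
      linarith
    have hdist : t ≤ μ - i := by rw [ht]; linarith
    have hsq : t^2 ≤ (μ - i)^2 := by nlinarith
    have hwi := hw i
    calc (m.choose i : ℝ) * p ^ i * (1 - p) ^ (m - i)
        = (1 / t^2) * (t^2 * ((m.choose i : ℝ) * p ^ i * (1 - p) ^ (m - i))) := by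
          field_simp
      _ ≤ _ := by
          apply mul_le_mul_of_nonneg_left _ (by positivity)
          exact mul_le_mul_of_nonneg_right hsq hwi
  have step2 : ∑ i ∈ (Finset.range (m + 1)).filter (fun i => 6 * i < k + 1),
        (1 / t^2) * ((μ - i)^2 * ((m.choose i : ℝ) * p ^ i * (1 - p) ^ (m - i)))
      ≤ ∑ i ∈ Finset.range (m + 1),
        (1 / t^2) * ((μ - i)^2 * ((m.choose i : ℝ) * p ^ i * (1 - p) ^ (m - i))) := by
    apply Finset.sum_le_sum_of_subset_of_nonneg (Finset.filter_subset _ _)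
    intro i _ _
    have := hw i
    positivity
  have step3 : ∑ i ∈ Finset.range (m + 1),
        (1 / t^2) * ((μ - i)^2 * ((m.choose i : ℝ) * p ^ i * (1 - p) ^ (m - i)))
      = (1 / t^2) * ((m : ℝ) * p * (1-p)) := by
    rw [← Finset.mul_sum, hvar]
  have step4 : (1 / t^2) * ((m : ℝ) * p * (1-p)) ≤ 8 / 21 := by
    have hμ0 : 0 ≤ μ := by rw [hμ]; positivity
    have hvle : (m : ℝ) * p * (1-p) ≤ μ := by
      have hmp : 0 ≤ μ * p := by rw [hμ]; positivity
      have : (m : ℝ) * p * (1-p) = μ - μ * p := by rw [hμ]; ring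
      linarith [this]
    have ha76 : 7/6 ≤ a := by rw [ha]; linarith
    have key : 21 * μ ≤ 8 * t^2 := by
      rw [ht]; exact star_cheb_aux μ a hμ4a ha76 hμ0
    have hdiv : μ / t^2 ≤ 8 / 21 := by
      rw [div_le_div_iff₀ (by positivity) (by norm_num : (0:ℝ) < 21)]
      linarith
    calc (1 / t^2) * ((m : ℝ) * p * (1-p)) ≤ (1 / t^2) * μ :=
          mul_le_mul_of_nonneg_left hvle (by positivity)
      _ = μ / t^2 := by ring
      _ ≤ 8 / 21 := hdiv
  calc ∑ i ∈ (Finset.range (m + 1)).filter (fun i => 6 * i < k + 1),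
        (m.choose i : ℝ) * p ^ i * (1 - p) ^ (m - i)
      ≤ _ := step1
    _ ≤ _ := step2
    _ = _ := step3
    _ ≤ 8 / 21 := step4
end

section
/- Let H be a star graph with n leaves, with its center and exactly k leaves colored blue (all others white), where k ≤ n/3. Under probabilistic zero forcing (each white leaf turns blue independently with probability (k+1)/n in the next step), the number of leaves that turn blue in the next step is at least (k+1)/6 with probability at least 1/5. -/
lemma binom_sum0 (m : ℕ) (x y : ℝ) :
    ∑ i ∈ Finset.range (m + 1), (m.choose i : ℝ) * x ^ i * y ^ (m - i) = (x + y) ^ m := by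
  rw [add_pow]
  exact Finset.sum_congr rfl fun i _ => by ring

lemma binom_sum1 (m : ℕ) (x y : ℝ) :
    ∑ i ∈ Finset.range (m + 1), (i : ℝ) * ((m.choose i : ℝ) * x ^ i * y ^ (m - i))
      = m * x * (x + y) ^ (m - 1) := by
  cases m with
  | zero => simp
  | succ s =>
    rw [Finset.sum_range_succ']
    simp only [Nat.cast_zero, zero_mul, add_zero]
    have key : ∀ i ∈ Finset.range (s + 1),
        ((i + 1 : ℕ) : ℝ) * (((s+1).choose (i+1) : ℝ) * x ^ (i+1) * y ^ (s + 1 - (i+1)))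
        = (s + 1 : ℝ) * x * ((s.choose i : ℝ) * x ^ i * y ^ (s - i)) := by
      intro i _
      have h' : ((s:ℝ) + 1) * (s.choose i : ℝ) = ((s + 1).choose (i + 1) : ℝ) * ((i:ℝ) + 1) := by
        exact_mod_cast Nat.add_one_mul_choose_eq s i
      have hss : s + 1 - (i + 1) = s - i := by omega
      rw [hss, pow_succ]
      push_cast
      linear_combination (-(x ^ i * x * y ^ (s - i))) * h'
    rw [Finset.sum_congr rfl key, ← Finset.mul_sum, binom_sum0]
    push_cast
    ring_nf

lemma binom_sum2 (m : ℕ) (x y : ℝ) :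
    ∑ i ∈ Finset.range (m + 1), (i : ℝ) * ((i : ℝ) - 1) * ((m.choose i : ℝ) * x ^ i * y ^ (m - i))
      = m * ((m : ℝ) - 1) * x ^ 2 * (x + y) ^ (m - 2) := by
  match m with
  | 0 => simp
  | 1 => norm_num [Finset.sum_range_succ]
  | (s+2) =>
    rw [Finset.sum_range_succ', Finset.sum_range_succ']
    simp only [Nat.cast_zero, zero_mul, add_zero, Nat.cast_one]
    norm_num
    have key : ∀ i ∈ Finset.range (s + 1),
        ((i:ℝ) + 1 + 1) * ((i:ℝ) + 1) *
            (((s+2).choose (i+1+1) : ℝ) * x ^ (i+1+1) * y ^ (s + 2 - (i+1+1)))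
        = (s + 2 : ℝ) * (s + 1 : ℝ) * x ^ 2 * ((s.choose i : ℝ) * x ^ i * y ^ (s - i)) := by
      intro i _
      have h1 : ((s:ℝ) + 1) * (s.choose i : ℝ) = ((s + 1).choose (i + 1) : ℝ) * ((i:ℝ) + 1) := by
        exact_mod_cast Nat.add_one_mul_choose_eq s i
      have h2 : ((s:ℝ) + 2) * ((s+1).choose (i+1) : ℝ)
          = ((s + 2).choose (i + 2) : ℝ) * ((i:ℝ) + 2) := by
        exact_mod_cast Nat.add_one_mul_choose_eq (s+1) (i+1)
      have hss : s + 2 - (i + 1 + 1) = s - i := by omega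
      rw [hss]
      push_cast
      have hx : x ^ (i + 1 + 1) = x ^ i * x ^ 2 := by ring
      rw [hx]
      linear_combination (-(((i:ℝ)+1) * (x ^ i * x ^ 2 * y ^ (s - i)))) * h2 + (-(((s:ℝ)+2) * (x ^ i * x ^ 2 * y ^ (s - i)))) * h1
    rw [Finset.sum_congr rfl key, ← Finset.mul_sum, binom_sum0]
    push_cast
    ring_nf

set_option maxHeartbeats 1000000 in
/-- Star graph with `n` leaves, center and exactly `k ≤ n/3` leaves blue: under
probabilistic zero forcing each white leaf turns blue independently with
probability `(k+1)/n`, so the number of leaves that turn blue in the next step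
is distributed `Bin(n-k, (k+1)/n)`, and it is at least `(k+1)/6` with
probability at least `1/5`. -/
theorem star_low_increase (n k : ℕ) (hn : 0 < n) (hk : 3 * k ≤ n) :
    (1 / 5 : ℝ) ≤
      ∑ i ∈ (Finset.range (n - k + 1)).filter (fun i => k + 1 ≤ 6 * i),
        (Nat.choose (n - k) i : ℝ) * (((k : ℝ) + 1) / n) ^ i *
          (1 - ((k : ℝ) + 1) / n) ^ (n - k - i) := by
  set m := n - k with hm
  set p : ℝ := ((k : ℝ) + 1) / n with hp
  set q : ℝ := 1 - p with hq
  set w : ℕ → ℝ := fun i => (m.choose i : ℝ) * p ^ i * q ^ (m - i) with hw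
  have hnR : (0 : ℝ) < n := by exact_mod_cast hn
  have hkn : k + 1 ≤ n := by omega
  have hp0 : 0 < p := by positivity
  have hp1 : p ≤ 1 := by
    rw [hp, div_le_one hnR]; exact_mod_cast hkn
  have hq0 : 0 ≤ q := by simp [hq]; linarith
  have hwpos : ∀ i, 0 ≤ w i := by
    intro i
    have : (0:ℝ) ≤ (m.choose i : ℝ) * p ^ i * q ^ (m - i) := by positivity
    simpa [hw] using this
  have hpq : p + q = 1 := by rw [hq]; ring
  -- total mass 1
  have T0 : ∑ i ∈ Finset.range (m + 1), w i = 1 := by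
    simpa [hpq] using binom_sum0 m p q
  have T1 : ∑ i ∈ Finset.range (m + 1), (i : ℝ) * w i = m * p := by
    simpa [hpq] using binom_sum1 m p q
  have T2 : ∑ i ∈ Finset.range (m + 1), (i : ℝ) * ((i : ℝ) - 1) * w i
      = m * ((m : ℝ) - 1) * p ^ 2 := by
    simpa [hpq] using binom_sum2 m p q
  set μ : ℝ := m * p with hmu
  -- second moment bound
  have Tsq : ∑ i ∈ Finset.range (m + 1), (i : ℝ) ^ 2 * w i ≤ μ ^ 2 + μ := by
    have he : ∀ i ∈ Finset.range (m + 1), (i : ℝ) ^ 2 * w i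
        = (i : ℝ) * ((i : ℝ) - 1) * w i + (i : ℝ) * w i := fun i _ => by ring
    rw [Finset.sum_congr rfl he, Finset.sum_add_distrib, T1, T2, hmu]
    have hm0 : (0:ℝ) ≤ m := by positivity
    nlinarith [mul_nonneg hm0 (sq_nonneg p)]
  -- lower bound on μ
  have hμ23 : (2:ℝ)/3 ≤ μ := by
    have h1 : 2 * n ≤ 3 * (m * (k + 1)) := by
      have : 2 * n ≤ 3 * m := by omega
      calc 2 * n ≤ 3 * m := this
        _ ≤ 3 * (m * (k+1)) := by nlinarith [Nat.zero_le m]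
    have h1R : (2:ℝ) * n ≤ 3 * (m * (k + 1)) := by exact_mod_cast h1
    have hμeq : μ = ((m:ℝ) * ((k:ℝ) + 1)) / n := by rw [hmu, hp]; ring
    rw [hμeq, div_le_div_iff₀ (by norm_num : (0:ℝ) < 3) hnR]
    linarith
  -- threshold bound : (k+1)/6 ≤ μ/4
  have hthr : ((k:ℝ) + 1) / 6 ≤ μ / 4 := by
    have h2 : 4 * n ≤ 6 * m := by omega
    have h2R : (4:ℝ) * n ≤ 6 * m := by exact_mod_cast h2
    have hμeq : μ / 4 = ((m:ℝ) * ((k:ℝ) + 1)) / (n * 4) := by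
      rw [hmu, hp]; field_simp
    rw [hμeq, div_le_div_iff₀ (by norm_num : (0:ℝ) < 6) (by positivity)]
    have hk0 : (0:ℝ) ≤ (k:ℝ) + 1 := by positivity
    nlinarith [mul_le_mul_of_nonneg_left h2R hk0]
  set S := (Finset.range (m + 1)).filter (fun i => k + 1 ≤ 6 * i) with hS
  -- the complement contributes at most μ/4 to the mean
  have hsplit : ∑ i ∈ S, (i:ℝ) * w i
      + ∑ i ∈ (Finset.range (m+1)).filter (fun i => ¬ (k + 1 ≤ 6 * i)), (i:ℝ) * w i
      = μ := by
    rw [← T1, hS]; exact Finset.sum_filter_add_sum_filter_not _ _ _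
  have hcompl : ∑ i ∈ (Finset.range (m+1)).filter (fun i => ¬ (k + 1 ≤ 6 * i)), (i:ℝ) * w i
      ≤ μ / 4 := by
    have step1 : ∑ i ∈ (Finset.range (m+1)).filter (fun i => ¬ (k + 1 ≤ 6 * i)), (i:ℝ) * w i
        ≤ ∑ i ∈ (Finset.range (m+1)).filter (fun i => ¬ (k + 1 ≤ 6 * i)), (μ/4) * w i := by
      apply Finset.sum_le_sum
      intro i hi
      simp only [Finset.mem_filter] at hi
      have h6 : 6 * i ≤ k := by omega
      have hiR : (i:ℝ) ≤ μ / 4 := by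
        have : (6:ℝ) * i ≤ k := by exact_mod_cast h6
        nlinarith [hthr]
      exact mul_le_mul_of_nonneg_right hiR (hwpos i)
    have step2 : ∑ i ∈ (Finset.range (m+1)).filter (fun i => ¬ (k + 1 ≤ 6 * i)), w i ≤ 1 := by
      rw [← T0]
      exact Finset.sum_le_sum_of_subset_of_nonneg (Finset.filter_subset _ _)
        (fun i hi _ => hwpos i)
    have hμ0 : 0 ≤ μ := by positivity
    calc _ ≤ _ := step1
      _ = (μ/4) * ∑ i ∈ (Finset.range (m+1)).filter (fun i => ¬ (k + 1 ≤ 6 * i)), w i := by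
          rw [Finset.mul_sum]
      _ ≤ (μ/4) * 1 := by
          apply mul_le_mul_of_nonneg_left step2 (by linarith)
      _ = μ/4 := by ring
  have hA : 3 * μ / 4 ≤ ∑ i ∈ S, (i:ℝ) * w i := by linarith
  -- Cauchy–Schwarz
  have hCS : (∑ i ∈ S, (i:ℝ) * w i) ^ 2
      ≤ (∑ i ∈ S, (i:ℝ)^2 * w i) * (∑ i ∈ S, w i) := by
    have := Finset.sum_mul_sq_le_sq_mul_sq S (fun i => (i:ℝ) * Real.sqrt (w i))
      (fun i => Real.sqrt (w i))
    have e1 : ∀ i ∈ S, (i:ℝ) * Real.sqrt (w i) * Real.sqrt (w i) = (i:ℝ) * w i := by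
      intro i _
      rw [mul_assoc, Real.mul_self_sqrt (hwpos i)]
    have e2 : ∀ i ∈ S, ((i:ℝ) * Real.sqrt (w i)) ^ 2 = (i:ℝ)^2 * w i := by
      intro i _
      rw [mul_pow, Real.sq_sqrt (hwpos i)]
    have e3 : ∀ i ∈ S, (Real.sqrt (w i)) ^ 2 = w i := fun i _ => Real.sq_sqrt (hwpos i)
    rw [Finset.sum_congr rfl e1, Finset.sum_congr rfl e2, Finset.sum_congr rfl e3] at this
    exact this
  have hS2 : ∑ i ∈ S, (i:ℝ)^2 * w i ≤ μ ^ 2 + μ := by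
    refine le_trans ?_ Tsq
    exact Finset.sum_le_sum_of_subset_of_nonneg (Finset.filter_subset _ _)
      (fun i hi _ => by positivity)
  have hP0 : 0 ≤ ∑ i ∈ S, w i := Finset.sum_nonneg fun i _ => hwpos i
  -- combine
  have hkey : (3 * μ / 4) ^ 2 ≤ (μ ^ 2 + μ) * (∑ i ∈ S, w i) := by
    have h34 : (0:ℝ) ≤ 3 * μ / 4 := by nlinarith [hμ23]
    calc (3 * μ / 4) ^ 2 ≤ (∑ i ∈ S, (i:ℝ) * w i) ^ 2 := by nlinarith [hA, h34]
      _ ≤ (∑ i ∈ S, (i:ℝ)^2 * w i) * (∑ i ∈ S, w i) := hCS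
      _ ≤ (μ ^ 2 + μ) * (∑ i ∈ S, w i) := by
          apply mul_le_mul_of_nonneg_right hS2 hP0
  have hμpos : (0:ℝ) < μ := by linarith
  have hgoal : (1/5 : ℝ) ≤ ∑ i ∈ S, w i := by
    nlinarith [hkey, hμ23, mul_pos hμpos hμpos,
      mul_nonneg (sub_nonneg.mpr hμ23) hμpos.le]
  exact hgoal
end

section
/- Let G be a connected graph with at least one blue vertex and at least one white vertex, and let X denote the set of blue vertices. Then after one step of probabilistic zero forcing, the expected number of blue vertices is at least |X| + 1. -/
open Finset

/-- Probability that white vertex `v` is forced blue in one step of probabilistic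
zero forcing from blue set `B`: each blue neighbor `u` of `v` independently forces `v`
with probability `|N[u] ∩ B| / deg u`. -/
noncomputable def forceProb {V : Type*} [Fintype V] [DecidableEq V]
    (G : SimpleGraph V) [DecidableRel G.Adj] (B : Finset V) (v : V) : ℝ :=
  1 - ∏ u ∈ B.filter (fun u => G.Adj u v),
      (1 - (((G.neighborFinset u ∩ B).card + 1 : ℝ) / (G.degree u)))

/-- Probability that the set of newly forced vertices in one step of probabilistic zero
forcing from blue set `B` is exactly `T` (white vertices turn blue independently). -/
noncomputable def stepMass {V : Type*} [Fintype V] [DecidableEq V]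
    (G : SimpleGraph V) [DecidableRel G.Adj] (B T : Finset V) : ℝ :=
  if T ⊆ Bᶜ then
    ∏ v ∈ Bᶜ, (if v ∈ T then forceProb G B v else 1 - forceProb G B v)
  else 0

/-- `probAllBlue G t B` is the probability that, starting from blue set `B`, all
vertices are blue after `t` steps of probabilistic zero forcing. -/
noncomputable def probAllBlue {V : Type*} [Fintype V] [DecidableEq V]
    (G : SimpleGraph V) [DecidableRel G.Adj] : ℕ → Finset V → ℝ
  | 0, B => if B = Finset.univ then 1 else 0
  | t + 1, B => ∑ T ∈ Bᶜ.powerset, stepMass G B T * probAllBlue G t (B ∪ T)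

/-- Expected propagation time of probabilistic zero forcing from initial blue set `S`:
`E[τ] = ∑_{t ≥ 0} P(τ > t) = ∑_{t ≥ 0} (1 - P^{(t)}(G,S))`. -/
noncomputable def ept {V : Type*} [Fintype V] [DecidableEq V]
    (G : SimpleGraph V) [DecidableRel G.Adj] (S : Finset V) : ℝ :=
  ∑' t : ℕ, (1 - probAllBlue G t S)

lemma walk_crossing {V : Type*} {G : SimpleGraph V} {B : Set V} :
    ∀ {a b : V}, G.Walk a b → a ∈ B → b ∉ B → ∃ u ∈ B, ∃ v, v ∉ B ∧ G.Adj u v := by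
  intro a b p
  induction p with
  | nil => intro ha hb; exact absurd ha hb
  | @cons x y z h q ih =>
    intro ha hb
    by_cases hc : y ∈ B
    · exact ih hc hb
    · exact ⟨x, ha, y, hc, h⟩

lemma factor_mem_Icc {V : Type*} [Fintype V] [DecidableEq V]
    (G : SimpleGraph V) [DecidableRel G.Adj] (B : Finset V) {v u : V}
    (hv : v ∉ B) (hu : G.Adj u v) :
    (1 - (((G.neighborFinset u ∩ B).card + 1 : ℝ) / (G.degree u))) ∈ Set.Icc (0:ℝ) 1 := by
  have hdeg : 0 < G.degree u := by rw [G.degree_pos_iff_exists_adj u]; exact ⟨v, hu⟩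
  have hvmem : v ∈ G.neighborFinset u := by rwa [SimpleGraph.mem_neighborFinset]
  have hlt : (G.neighborFinset u ∩ B).card < G.degree u := by
    rw [← SimpleGraph.card_neighborFinset_eq_degree]
    exact Finset.card_lt_card ⟨Finset.inter_subset_left,
      fun hsub => hv (Finset.mem_inter.mp (hsub hvmem)).2⟩
  constructor
  · have : ((G.neighborFinset u ∩ B).card + 1 : ℝ) / (G.degree u) ≤ 1 := by
      rw [div_le_one (by exact_mod_cast hdeg)]
      exact_mod_cast hlt
    linarith
  · have : (0:ℝ) ≤ ((G.neighborFinset u ∩ B).card + 1 : ℝ) / (G.degree u) := by positivity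
    linarith

lemma forceProb_nonneg {V : Type*} [Fintype V] [DecidableEq V]
    (G : SimpleGraph V) [DecidableRel G.Adj] (B : Finset V) {v : V} (hv : v ∉ B) :
    0 ≤ forceProb G B v := by
  unfold forceProb
  have : ∏ u ∈ B.filter (fun u => G.Adj u v),
      (1 - (((G.neighborFinset u ∩ B).card + 1 : ℝ) / (G.degree u))) ≤ 1 := by
    apply Finset.prod_le_one
    · intro u hu
      exact (factor_mem_Icc G B hv (Finset.mem_filter.mp hu).2).1
    · intro u hu
      exact (factor_mem_Icc G B hv (Finset.mem_filter.mp hu).2).2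
  linarith

lemma forceProb_lower {V : Type*} [Fintype V] [DecidableEq V]
    (G : SimpleGraph V) [DecidableRel G.Adj] (B : Finset V) {v u : V}
    (hv : v ∉ B) (huB : u ∈ B) (hu : G.Adj u v) :
    (((G.neighborFinset u ∩ B).card + 1 : ℝ) / (G.degree u)) ≤ forceProb G B v := by
  unfold forceProb
  set f : V → ℝ := fun w => (1 - (((G.neighborFinset w ∩ B).card + 1 : ℝ) / (G.degree w)))
  have humem : u ∈ B.filter (fun w => G.Adj w v) := Finset.mem_filter.mpr ⟨huB, hu⟩
  have key : ∏ w ∈ B.filter (fun w => G.Adj w v), f w ≤ f u := by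
    rw [← Finset.mul_prod_erase _ f humem]
    have h1 : ∏ w ∈ (B.filter (fun w => G.Adj w v)).erase u, f w ≤ 1 := by
      apply Finset.prod_le_one
      · intro w hw
        exact (factor_mem_Icc G B hv (Finset.mem_filter.mp (Finset.mem_of_mem_erase hw)).2).1
      · intro w hw
        exact (factor_mem_Icc G B hv (Finset.mem_filter.mp (Finset.mem_of_mem_erase hw)).2).2
    have h0 : 0 ≤ f u := (factor_mem_Icc G B hv hu).1
    calc f u * ∏ w ∈ (B.filter (fun w => G.Adj w v)).erase u, f w ≤ f u * 1 :=
          mul_le_mul_of_nonneg_left h1 h0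
      _ = f u := mul_one _
  simp only [f] at key
  linarith [key]


/-- If `G` is connected and the blue set `B` is nonempty but not everything, then after
one step of probabilistic zero forcing the expected number of blue vertices, namely
`|B| + ∑_{v white} P(v is forced)`, is at least `|B| + 1`. -/
theorem expected_increase_ge_one {V : Type*} [Fintype V] [DecidableEq V]
    (G : SimpleGraph V) [DecidableRel G.Adj] (hG : G.Connected)
    (B : Finset V) (hB : B.Nonempty) (hBu : B ≠ Finset.univ) :
    (B.card : ℝ) + 1 ≤ (B.card : ℝ) + ∑ v ∈ Bᶜ, forceProb G B v := by
  -- find crossing edge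
  obtain ⟨a, ha⟩ := hB
  obtain ⟨b, hb⟩ : ∃ b, b ∉ B := by
    by_contra h
    push_neg at h
    exact hBu (Finset.eq_univ_iff_forall.mpr h)
  obtain ⟨u, huB, v0, hv0, huv0⟩ :=
    walk_crossing (B := (fun x => x ∈ B)) ((hG a b).some) ha hb
  -- white neighbors of u
  set W : Finset V := G.neighborFinset u \ B with hW
  have hv0W : v0 ∈ W := by
    rw [hW, Finset.mem_sdiff, SimpleGraph.mem_neighborFinset]
    exact ⟨huv0, hv0⟩
  have hWne : W.Nonempty := ⟨v0, hv0W⟩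
  have hWcard : 1 ≤ W.card := Finset.card_pos.mpr hWne
  set bb : ℕ := (G.neighborFinset u ∩ B).card
  have hdeg : G.degree u = bb + W.card := by
    rw [← SimpleGraph.card_neighborFinset_eq_degree, hW]
    exact (Finset.card_inter_add_card_sdiff _ _).symm
  -- lower bound the sum over W
  have hWsub : W ⊆ Bᶜ := by
    intro x hx
    rw [Finset.mem_compl]
    exact (Finset.mem_sdiff.mp hx).2
  have hsum1 : ∑ v ∈ W, forceProb G B v ≤ ∑ v ∈ Bᶜ, forceProb G B v := by
    apply Finset.sum_le_sum_of_subset_of_nonneg hWsub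
    intro x hx _
    exact forceProb_nonneg G B (Finset.mem_compl.mp hx)
  have hsum2 : (W.card : ℝ) * ((bb + 1 : ℝ) / (G.degree u)) ≤ ∑ v ∈ W, forceProb G B v := by
    calc (W.card : ℝ) * ((bb + 1 : ℝ) / (G.degree u))
        = ∑ _v ∈ W, ((bb + 1 : ℝ) / (G.degree u)) := by rw [Finset.sum_const, nsmul_eq_mul]
      _ ≤ ∑ v ∈ W, forceProb G B v := by
          apply Finset.sum_le_sum
          intro v hv
          obtain ⟨hvn, hvB⟩ := Finset.mem_sdiff.mp hv
          exact forceProb_lower G B hvB huB ((G.mem_neighborFinset u v).mp hvn)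
  have hfin : (1:ℝ) ≤ (W.card : ℝ) * ((bb + 1 : ℝ) / (G.degree u)) := by
    rw [hdeg]
    have hw : (1:ℝ) ≤ (W.card : ℝ) := by exact_mod_cast hWcard
    have hb0 : (0:ℝ) ≤ (bb : ℝ) := Nat.cast_nonneg _
    push_cast
    have hpos : (0:ℝ) < (bb : ℝ) + (W.card : ℝ) := by linarith
    rw [mul_div_assoc', le_div_iff₀ hpos, one_mul]
    nlinarith
  linarith [hsum1, hsum2, hfin]
end

section
/- For any connected graph G with n ≥ 1 vertices, ept(G) ≤ n - 1, where ept(G) is the minimum over vertices v of the expected propagation time of probabilistic zero forcing started from {v}. -/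
open Finset

section Aux
variable {V : Type*} [Fintype V] [DecidableEq V] (G : SimpleGraph V) [DecidableRel G.Adj]

/-- The per-blue-neighbor failure factor is in `[0,1]` when `v` is white. -/
lemma pzf_factor_bounds {B : Finset V} {v : V} (hv : v ∉ B) {u : V} (hadj : G.Adj u v) :
    0 ≤ 1 - (((G.neighborFinset u ∩ B).card + 1 : ℝ) / (G.degree u)) ∧
      1 - (((G.neighborFinset u ∩ B).card + 1 : ℝ) / (G.degree u)) ≤ 1 := by
  have hdeg : 0 < G.degree u := (G.degree_pos_iff_exists_adj u).mpr ⟨v, hadj⟩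
  have hsub : G.neighborFinset u ∩ B ⊆ (G.neighborFinset u).erase v := by
    intro w hw
    rcases Finset.mem_inter.mp hw with ⟨h1, h2⟩
    refine Finset.mem_erase.mpr ⟨?_, h1⟩
    rintro rfl; exact hv h2
  have hvm : v ∈ G.neighborFinset u := (SimpleGraph.mem_neighborFinset G u v).mpr hadj
  have hcard : (G.neighborFinset u ∩ B).card + 1 ≤ G.degree u := by
    have h := Finset.card_le_card hsub
    rw [Finset.card_erase_of_mem hvm] at h
    have hd : G.degree u = (G.neighborFinset u).card := rfl
    omega
  have hdegR : (0:ℝ) < (G.degree u : ℝ) := by exact_mod_cast hdeg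
  constructor
  · have h1 : (((G.neighborFinset u ∩ B).card + 1 : ℝ)) ≤ (G.degree u : ℝ) := by
      exact_mod_cast hcard
    have := (div_le_one hdegR).mpr h1
    linarith
  · have : (0:ℝ) ≤ (((G.neighborFinset u ∩ B).card + 1 : ℝ) / (G.degree u)) := by positivity
    linarith

lemma pzf_forceProb_nonneg {B : Finset V} {v : V} (hv : v ∉ B) : 0 ≤ forceProb G B v := by
  unfold forceProb
  have : ∏ u ∈ B.filter (fun u => G.Adj u v),
      (1 - (((G.neighborFinset u ∩ B).card + 1 : ℝ) / (G.degree u))) ≤ 1 := by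
    apply Finset.prod_le_one
    · intro u hu
      exact (pzf_factor_bounds G hv (Finset.mem_filter.mp hu).2).1
    · intro u hu
      exact (pzf_factor_bounds G hv (Finset.mem_filter.mp hu).2).2
  linarith

lemma pzf_forceProb_le_one {B : Finset V} {v : V} (hv : v ∉ B) : forceProb G B v ≤ 1 := by
  unfold forceProb
  have : (0:ℝ) ≤ ∏ u ∈ B.filter (fun u => G.Adj u v),
      (1 - (((G.neighborFinset u ∩ B).card + 1 : ℝ) / (G.degree u))) := by
    apply Finset.prod_nonneg
    intro u hu
    exact (pzf_factor_bounds G hv (Finset.mem_filter.mp hu).2).1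
  linarith

lemma pzf_forceProb_ge {B : Finset V} {v : V} (hv : v ∉ B) {u : V} (hu : u ∈ B)
    (hadj : G.Adj u v) :
    ((G.neighborFinset u ∩ B).card + 1 : ℝ) / (G.degree u) ≤ forceProb G B v := by
  unfold forceProb
  have humem : u ∈ B.filter (fun u => G.Adj u v) := Finset.mem_filter.mpr ⟨hu, hadj⟩
  have hprod : ∏ w ∈ B.filter (fun u => G.Adj u v),
      (1 - (((G.neighborFinset w ∩ B).card + 1 : ℝ) / (G.degree w)))
      ≤ 1 - (((G.neighborFinset u ∩ B).card + 1 : ℝ) / (G.degree u)) := by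
    rw [← Finset.mul_prod_erase _
      (fun w => (1 - (((G.neighborFinset w ∩ B).card + 1 : ℝ) / (G.degree w)))) humem]
    have h1 : ∏ w ∈ (B.filter (fun u => G.Adj u v)).erase u,
        (1 - (((G.neighborFinset w ∩ B).card + 1 : ℝ) / (G.degree w))) ≤ 1 := by
      apply Finset.prod_le_one
      · intro w hw
        exact (pzf_factor_bounds G hv (Finset.mem_filter.mp (Finset.mem_of_mem_erase hw)).2).1
      · intro w hw
        exact (pzf_factor_bounds G hv (Finset.mem_filter.mp (Finset.mem_of_mem_erase hw)).2).2
    have h0 : 0 ≤ 1 - (((G.neighborFinset u ∩ B).card + 1 : ℝ) / (G.degree u)) :=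
      (pzf_factor_bounds G hv hadj).1
    calc (1 - (((G.neighborFinset u ∩ B).card + 1 : ℝ) / (G.degree u))) *
          ∏ w ∈ (B.filter (fun u => G.Adj u v)).erase u,
            (1 - (((G.neighborFinset w ∩ B).card + 1 : ℝ) / (G.degree w)))
        ≤ (1 - (((G.neighborFinset u ∩ B).card + 1 : ℝ) / (G.degree u))) * 1 :=
          mul_le_mul_of_nonneg_left h1 h0
      _ = _ := mul_one _
  linarith

end Aux
section Aux2
variable {V : Type*} [DecidableEq V]

lemma pzf_sum_powerset_prod (s : Finset V) (p : V → ℝ) :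
    ∑ T ∈ s.powerset, ∏ v ∈ s, (if v ∈ T then p v else 1 - p v) = 1 := by
  induction s using Finset.induction with
  | empty => simp
  | @insert a s ha ih =>
    rw [Finset.sum_powerset_insert ha]
    have h1 : ∀ T ∈ s.powerset,
        ∏ v ∈ insert a s, (if v ∈ T then p v else 1 - p v)
          = (1 - p a) * ∏ v ∈ s, (if v ∈ T then p v else 1 - p v) := by
      intro T hT
      rw [Finset.prod_insert ha, if_neg (fun h => ha (Finset.mem_powerset.mp hT h))]
    have h2 : ∀ T ∈ s.powerset,
        ∏ v ∈ insert a s, (if v ∈ insert a T then p v else 1 - p v)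
          = p a * ∏ v ∈ s, (if v ∈ T then p v else 1 - p v) := by
      intro T hT
      rw [Finset.prod_insert ha, if_pos (Finset.mem_insert_self a T)]
      congr 1
      refine Finset.prod_congr rfl fun v hv => ?_
      have hva : v ≠ a := fun h => ha (h ▸ hv)
      simp [Finset.mem_insert, hva]
    rw [Finset.sum_congr rfl h1, Finset.sum_congr rfl h2, ← Finset.mul_sum, ← Finset.mul_sum, ih]
    ring

lemma pzf_sum_powerset_ite (s : Finset V) (p : V → ℝ) {v : V} (hv : v ∈ s) :
    ∑ T ∈ s.powerset,
      (if v ∈ T then ∏ w ∈ s, (if w ∈ T then p w else 1 - p w) else 0) = p v := by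
  have hs : insert v (s.erase v) = s := Finset.insert_erase hv
  have hvs : v ∉ s.erase v := Finset.notMem_erase v s
  rw [← hs, Finset.sum_powerset_insert hvs]
  have h1 : ∀ T ∈ (s.erase v).powerset,
      (if v ∈ T then ∏ w ∈ insert v (s.erase v), (if w ∈ T then p w else 1 - p w) else 0)
        = 0 := by
    intro T hT
    rw [if_neg (fun h => hvs (Finset.mem_powerset.mp hT h))]
  have h2 : ∀ T ∈ (s.erase v).powerset,
      (if v ∈ insert v T then
          ∏ w ∈ insert v (s.erase v), (if w ∈ insert v T then p w else 1 - p w) else 0)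
        = p v * ∏ w ∈ s.erase v, (if w ∈ T then p w else 1 - p w) := by
    intro T hT
    rw [if_pos (Finset.mem_insert_self v T), Finset.prod_insert hvs,
      if_pos (Finset.mem_insert_self v T)]
    congr 1
    refine Finset.prod_congr rfl fun w hw => ?_
    have hwv : w ≠ v := Finset.ne_of_mem_erase hw
    simp [Finset.mem_insert, hwv]
  rw [Finset.sum_congr rfl h1, Finset.sum_congr rfl h2, Finset.sum_const, ← Finset.mul_sum,
    pzf_sum_powerset_prod]
  simp

lemma pzf_sum_powerset_card (s : Finset V) (p : V → ℝ) :
    ∑ T ∈ s.powerset,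
      (∏ v ∈ s, (if v ∈ T then p v else 1 - p v)) * (T.card : ℝ) = ∑ v ∈ s, p v := by
  have hcard : ∀ T ∈ s.powerset, (T.card : ℝ) = ∑ v ∈ s, (if v ∈ T then (1:ℝ) else 0) := by
    intro T hT
    rw [Finset.sum_ite_mem, Finset.inter_eq_right.mpr (Finset.mem_powerset.mp hT)]
    simp
  rw [Finset.sum_congr rfl fun T hT => by rw [hcard T hT]]
  simp_rw [Finset.mul_sum, mul_ite, mul_one, mul_zero]
  rw [Finset.sum_comm]
  refine Finset.sum_congr rfl fun v hv => ?_
  rw [← pzf_sum_powerset_ite s p hv]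

end Aux2
section Aux3
variable {V : Type*} [Fintype V] [DecidableEq V] (G : SimpleGraph V) [DecidableRel G.Adj]

lemma pzf_stepMass_eq {B T : Finset V} (hT : T ∈ Bᶜ.powerset) :
    stepMass G B T = ∏ v ∈ Bᶜ, (if v ∈ T then forceProb G B v else 1 - forceProb G B v) := by
  rw [stepMass, if_pos (Finset.mem_powerset.mp hT)]

lemma pzf_stepMass_nonneg (B T : Finset V) : 0 ≤ stepMass G B T := by
  rw [stepMass]
  split_ifs with h
  · apply Finset.prod_nonneg
    intro v hv
    have hvB : v ∉ B := Finset.mem_compl.mp hv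
    have h0 := pzf_forceProb_nonneg G hvB
    have h1 := pzf_forceProb_le_one G hvB
    split_ifs <;> linarith
  · exact le_refl 0
    
lemma pzf_sum_stepMass (B : Finset V) : ∑ T ∈ Bᶜ.powerset, stepMass G B T = 1 := by
  rw [Finset.sum_congr rfl fun T hT => pzf_stepMass_eq G hT]
  exact pzf_sum_powerset_prod Bᶜ (forceProb G B)

lemma pzf_sum_stepMass_card (B : Finset V) :
    ∑ T ∈ Bᶜ.powerset, stepMass G B T * (T.card : ℝ) = ∑ v ∈ Bᶜ, forceProb G B v := by
  rw [Finset.sum_congr rfl fun T hT => by rw [pzf_stepMass_eq G hT]]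
  exact pzf_sum_powerset_card Bᶜ (forceProb G B)

lemma pzf_probAllBlue_nonneg (t : ℕ) (B : Finset V) : 0 ≤ probAllBlue G t B := by
  induction t generalizing B with
  | zero =>
    rw [probAllBlue]
    split_ifs <;> norm_num
  | succ t ih =>
    rw [probAllBlue]
    exact Finset.sum_nonneg fun T hT => mul_nonneg (pzf_stepMass_nonneg G B T) (ih _)

lemma pzf_probAllBlue_le_one (t : ℕ) (B : Finset V) : probAllBlue G t B ≤ 1 := by
  induction t generalizing B with
  | zero =>
    rw [probAllBlue]
    split_ifs <;> norm_num
  | succ t ih =>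
    rw [probAllBlue]
    calc ∑ T ∈ Bᶜ.powerset, stepMass G B T * probAllBlue G t (B ∪ T)
        ≤ ∑ T ∈ Bᶜ.powerset, stepMass G B T :=
          Finset.sum_le_sum fun T hT =>
            mul_le_of_le_one_right (pzf_stepMass_nonneg G B T) (ih _)
      _ = 1 := pzf_sum_stepMass G B

lemma pzf_probAllBlue_univ (t : ℕ) : probAllBlue G t (Finset.univ : Finset V) = 1 := by
  induction t with
  | zero => rw [probAllBlue]; simp
  | succ t ih =>
    rw [probAllBlue]
    have : (Finset.univ : Finset V)ᶜ = ∅ := by simp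
    rw [this, Finset.powerset_empty, Finset.sum_singleton]
    have hsm : stepMass G Finset.univ ∅ = 1 := by
      rw [stepMass, if_pos (Finset.empty_subset _), this, Finset.prod_empty]
    rw [hsm, Finset.union_empty, ih, mul_one]

end Aux3
section Aux4
variable {V : Type*} [Fintype V] [DecidableEq V] (G : SimpleGraph V) [DecidableRel G.Adj]

lemma pzf_one_le_sum_forceProb (hG : G.Connected) {B : Finset V} (hB : B.Nonempty)
    (hBU : B ≠ Finset.univ) : 1 ≤ ∑ v ∈ Bᶜ, forceProb G B v := by
  obtain ⟨b, hb⟩ := hB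
  obtain ⟨x, hx⟩ : ∃ x, x ∉ B := by
    by_contra h
    push_neg at h
    exact hBU (Finset.eq_univ_iff_forall.mpr h)
  obtain ⟨p⟩ := hG.preconnected b x
  obtain ⟨d, _, hd1, hd2⟩ := p.exists_boundary_dart (↑B : Set V) (by exact_mod_cast hb)
    (by exact_mod_cast hx)
  set u := d.toProd.1 with hu
  have huB : u ∈ B := by exact_mod_cast hd1
  have hadj : G.Adj u d.toProd.2 := d.adj
  have hsnd : d.toProd.2 ∉ B := by exact_mod_cast hd2
  set W := G.neighborFinset u \ B with hW
  have hWsub : W ⊆ Bᶜ := fun w hw => Finset.mem_compl.mpr (Finset.mem_sdiff.mp hw).2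
  have hWne : d.toProd.2 ∈ W := Finset.mem_sdiff.mpr
    ⟨(SimpleGraph.mem_neighborFinset G u _).mpr hadj, hsnd⟩
  have hWpos : 0 < W.card := Finset.card_pos.mpr ⟨_, hWne⟩
  set k := (G.neighborFinset u ∩ B).card with hk
  have hcards : W.card + k = G.degree u := Finset.card_sdiff_add_card_inter _ _
  have hdeg : 0 < G.degree u := (G.degree_pos_iff_exists_adj u).mpr ⟨_, hadj⟩
  have step1 : ∑ v ∈ W, forceProb G B v ≤ ∑ v ∈ Bᶜ, forceProb G B v := by
    apply Finset.sum_le_sum_of_subset_of_nonneg hWsub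
    intro v hv _
    exact pzf_forceProb_nonneg G (Finset.mem_compl.mp hv)
  have step2 : (W.card : ℝ) * (((k : ℝ) + 1) / (G.degree u)) ≤ ∑ v ∈ W, forceProb G B v := by
    have := Finset.card_nsmul_le_sum W (forceProb G B) (((k : ℝ) + 1) / (G.degree u)) ?_
    · rwa [nsmul_eq_mul] at this
    · intro v hv
      rcases Finset.mem_sdiff.mp hv with ⟨hv1, hv2⟩
      exact pzf_forceProb_ge G hv2 huB ((SimpleGraph.mem_neighborFinset G u v).mp hv1)
  have step3 : (1 : ℝ) ≤ (W.card : ℝ) * (((k : ℝ) + 1) / (G.degree u)) := by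
    rw [mul_div_assoc', le_div_iff₀ (by exact_mod_cast hdeg), one_mul]
    have hnat : G.degree u ≤ W.card * (k + 1) := by nlinarith
    exact_mod_cast hnat
  linarith

lemma pzf_main_bound (hG : G.Connected) :
    ∀ (N : ℕ) (B : Finset V), B.Nonempty →
      ∑ t ∈ Finset.range N, (1 - probAllBlue G t B) ≤ (Fintype.card V : ℝ) - B.card := by
  intro N
  induction N with
  | zero =>
    intro B hB
    simp only [Finset.range_zero, Finset.sum_empty, sub_nonneg]
    exact_mod_cast Finset.card_le_univ B
  | succ N ih =>
    intro B hB
    by_cases hU : B = Finset.univ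
    · subst hU
      simp [pzf_probAllBlue_univ, Finset.card_univ]
    · rw [Finset.sum_range_succ']
      have h0 : probAllBlue G 0 B = 0 := by rw [probAllBlue, if_neg hU]
      have key : ∀ t, 1 - probAllBlue G (t+1) B
          = ∑ T ∈ Bᶜ.powerset, stepMass G B T * (1 - probAllBlue G t (B ∪ T)) := by
        intro t
        rw [probAllBlue]
        rw [eq_comm]
        simp_rw [mul_sub, mul_one]
        rw [Finset.sum_sub_distrib, pzf_sum_stepMass]
      have hswap : ∑ t ∈ Finset.range N, (1 - probAllBlue G (t+1) B)
          = ∑ T ∈ Bᶜ.powerset, stepMass G B T *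
              ∑ t ∈ Finset.range N, (1 - probAllBlue G t (B ∪ T)) := by
        simp_rw [key, Finset.mul_sum]
        rw [Finset.sum_comm]
      rw [hswap, h0, sub_zero]
      have hb1 : ∑ T ∈ Bᶜ.powerset, stepMass G B T *
            ∑ t ∈ Finset.range N, (1 - probAllBlue G t (B ∪ T))
          ≤ ∑ T ∈ Bᶜ.powerset, stepMass G B T *
              ((Fintype.card V : ℝ) - B.card - T.card) := by
        apply Finset.sum_le_sum
        intro T hT
        have hcardu : ((B ∪ T).card : ℝ) = (B.card : ℝ) + T.card := by
          have hdisj : Disjoint B T := by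
            rw [Finset.disjoint_left]
            intro a haB haT
            exact Finset.mem_compl.mp (Finset.mem_powerset.mp hT haT) haB
          rw [Finset.union_comm, Finset.card_union_of_disjoint hdisj.symm]
          push_cast
          ring
        have := ih (B ∪ T) (hB.mono Finset.subset_union_left)
        rw [hcardu] at this
        apply mul_le_mul_of_nonneg_left _ (pzf_stepMass_nonneg G B T)
        linarith
      have hb2 : ∑ T ∈ Bᶜ.powerset, stepMass G B T *
            ((Fintype.card V : ℝ) - B.card - T.card)
          = ((Fintype.card V : ℝ) - B.card) - ∑ v ∈ Bᶜ, forceProb G B v := by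
        simp_rw [mul_sub, Finset.sum_sub_distrib, ← Finset.sum_mul, pzf_sum_stepMass,
          pzf_sum_stepMass_card, one_mul]
      have hb3 := pzf_one_le_sum_forceProb G hG hB hU
      linarith
end Aux4

/-- For any connected graph `G` on `n ≥ 1` vertices, the minimum over vertices `v` of
the expected propagation time from `{v}` is at most `n - 1`. -/
theorem ept_min_le_card_sub_one {V : Type*} [Fintype V] [DecidableEq V]
    (G : SimpleGraph V) [DecidableRel G.Adj] (hG : G.Connected)
    (hn : 1 ≤ Fintype.card V) :
    (⨅ v : V, ept G {v}) ≤ (Fintype.card V : ℝ) - 1 := by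
  have hV : Nonempty V := Fintype.card_pos_iff.mp hn
  obtain ⟨v₀⟩ := hV
  have hbdd : BddBelow (Set.range fun v : V => ept G {v}) := by
    refine ⟨0, ?_⟩
    rintro x ⟨v, rfl⟩
    refine tsum_nonneg fun t => ?_
    have := pzf_probAllBlue_le_one G t {v}
    linarith
  refine le_trans (ciInf_le hbdd v₀) ?_
  unfold ept
  apply Real.tsum_le_of_sum_range_le
  · intro t
    have := pzf_probAllBlue_le_one G t ({v₀} : Finset V)
    linarith
  · intro n
    have h := pzf_main_bound G hG n {v₀} (Finset.singleton_nonempty v₀)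
    simpa using h
end

section
/- Let G be a graph with blue set B. Let v_1, ..., v_k be the blue vertices having at least one white neighbor, and w_1, ..., w_ℓ be the white vertices having at least one blue neighbor. If k ≥ 3 and ℓ ≥ 3, then either the expected number of vertices forced blue in one step of probabilistic zero forcing is at least 2, or all but at most one of the v_i have exactly one white neighbor and there is a single white vertex adjacent to all of v_1, ..., v_k. -/
open Finset

/-!
Write `d u` for the number of white neighbours of a blue vertex `u`. A blue neighbour `u` of a
white `w` forces it with probability `(|N(u) ∩ B| + 1) / (d u + |N(u) ∩ B|) ≥ 1 / d u`, so the
expected number of forced vertices is at least what it would be if only the blue vertices of a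
chosen set forced, each with probability `1 / d u`. Adding `u` to that set adds one expected
forced vertex and damps the rest by `1 - 1 / d u`; this gives `1 + 1` for two blue vertices with
disjoint white neighbourhoods and `1 + (2/3)(1 + (1/2) 1)` for three blue vertices with `d ≥ 3, 2, 1`.
If every `d u ≤ 2`, each white vertex with a blue neighbour is forced with probability `≥ 1/2`
(`≥ 3/4` with two blue neighbours, `= 1` next to a blue vertex with `d = 1`), and counting these
white vertices gives `2`. Otherwise one blue vertex has `d ≥ 3` and all others `d = 1`, and as
the white neighbourhoods meet pairwise, the white neighbour of any `d = 1` vertex is common to all.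
-/

section

variable {V : Type*} [Fintype V] [DecidableEq V] {G : SimpleGraph V} [DecidableRel G.Adj]
  {B : Finset V} {u v w : V}

variable (G B) in
def boundaryBlue : Finset V := B.filter fun v => (G.neighborFinset v \ B).Nonempty

variable (G B) in
def boundaryWhite : Finset V := Bᶜ.filter fun w => (G.neighborFinset w ∩ B).Nonempty

variable (G B) in
noncomputable def forceChance (u : V) : ℝ :=
  (#(G.neighborFinset u ∩ B) + 1 : ℝ) / G.degree u

lemma forceProb_eq_one_sub_prod (v : V) :
    forceProb G B v = 1 - ∏ u ∈ B.filter (G.Adj · v), (1 - forceChance G B u) := rfl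

lemma mem_neighborFinset_sdiff : w ∈ G.neighborFinset u \ B ↔ G.Adj u w ∧ w ∉ B := by
  simp

lemma mem_boundaryBlue : u ∈ boundaryBlue G B ↔ u ∈ B ∧ (G.neighborFinset u \ B).Nonempty := by
  simp [boundaryBlue]

lemma mem_boundaryWhite : w ∈ boundaryWhite G B ↔ w ∉ B ∧ ∃ u ∈ B, G.Adj u w := by
  simp [boundaryWhite, Finset.Nonempty, G.adj_comm, and_comm]

lemma mem_boundaryBlue_of_adj (hu : u ∈ B) (hw : w ∉ B) (huw : G.Adj u w) :
    u ∈ boundaryBlue G B :=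
  mem_boundaryBlue.2 ⟨hu, w, mem_neighborFinset_sdiff.2 ⟨huw, hw⟩⟩

lemma mem_boundaryWhite_of_mem (hu : u ∈ B) (hw : w ∈ G.neighborFinset u \ B) :
    w ∈ boundaryWhite G B :=
  mem_boundaryWhite.2 ⟨(mem_neighborFinset_sdiff.1 hw).2, u, hu, (mem_neighborFinset_sdiff.1 hw).1⟩

lemma degree_eq_card_sdiff_add_card_inter (u : V) :
    G.degree u = #(G.neighborFinset u \ B) + #(G.neighborFinset u ∩ B) :=
  (card_sdiff_add_card_inter _ _).symm

lemma inv_card_sdiff_le_forceChance (hw : w ∉ B) (huw : G.Adj u w) :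
    (#(G.neighborFinset u \ B) : ℝ)⁻¹ ≤ forceChance G B u := by
  have hd : (1 : ℝ) ≤ #(G.neighborFinset u \ B) := by
    exact_mod_cast card_pos.2 ⟨w, mem_neighborFinset_sdiff.2 ⟨huw, hw⟩⟩
  rw [forceChance, degree_eq_card_sdiff_add_card_inter (B := B), inv_eq_one_div,
    div_le_div_iff₀ (by linarith) (by push_cast; positivity)]
  push_cast
  nlinarith

lemma forceChance_le_one (hw : w ∉ B) (huw : G.Adj u w) : forceChance G B u ≤ 1 := by
  have hd : (1 : ℝ) ≤ #(G.neighborFinset u \ B) := by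
    exact_mod_cast card_pos.2 ⟨w, mem_neighborFinset_sdiff.2 ⟨huw, hw⟩⟩
  rw [forceChance, degree_eq_card_sdiff_add_card_inter (B := B),
    div_le_one (by push_cast; positivity)]
  push_cast
  linarith

lemma one_sub_prod_le_forceProb (hw : w ∉ B) {T : Finset V} (hT : T ⊆ B.filter (G.Adj · w)) :
    1 - ∏ u ∈ T, (1 - (#(G.neighborFinset u \ B) : ℝ)⁻¹) ≤ forceProb G B w := by
  have hchance : ∀ u ∈ B.filter (G.Adj · w),
      0 ≤ 1 - forceChance G B u ∧ 1 - forceChance G B u ≤ 1 - (#(G.neighborFinset u \ B) : ℝ)⁻¹ := by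
    intro u hu
    have huw := (mem_filter.1 hu).2
    exact ⟨sub_nonneg.2 (forceChance_le_one hw huw),
      sub_le_sub_left (inv_card_sdiff_le_forceChance hw huw) _⟩
  have hsub : ∏ u ∈ B.filter (G.Adj · w), (1 - forceChance G B u)
      ≤ ∏ u ∈ T, (1 - forceChance G B u) :=
    prod_le_prod_of_subset_of_le_one hT (fun u hu => (hchance u hu).1) fun u hu _ =>
      (hchance u hu).2.trans (sub_le_self _ (inv_nonneg.2 (Nat.cast_nonneg _)))
  have hT' : ∏ u ∈ T, (1 - forceChance G B u)
      ≤ ∏ u ∈ T, (1 - (#(G.neighborFinset u \ B) : ℝ)⁻¹) :=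
    prod_le_prod (fun u hu => (hchance u (hT hu)).1) fun u hu => (hchance u (hT hu)).2
  rw [forceProb_eq_one_sub_prod]
  linarith

lemma forceProb_nonneg_s8 (hw : w ∉ B) : 0 ≤ forceProb G B w := by
  simpa using one_sub_prod_le_forceProb (G := G) hw (empty_subset _)

lemma inv_card_sdiff_le_forceProb (hu : u ∈ B) (hw : w ∉ B) (huw : G.Adj u w) :
    (#(G.neighborFinset u \ B) : ℝ)⁻¹ ≤ forceProb G B w := by
  simpa using one_sub_prod_le_forceProb hw (singleton_subset_iff.2 (mem_filter.2 ⟨hu, huw⟩))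

lemma sum_forceProb_le_of_subset {s : Finset V} (hs : s ⊆ Bᶜ) :
    ∑ w ∈ s, forceProb G B w ≤ ∑ w ∈ Bᶜ, forceProb G B w :=
  sum_le_sum_of_subset_of_nonneg hs fun _ hw _ => forceProb_nonneg_s8 (mem_compl.1 hw)

lemma one_le_sum_forceProb_sdiff (hu : u ∈ boundaryBlue G B) :
    1 ≤ ∑ w ∈ G.neighborFinset u \ B, forceProb G B w := by
  obtain ⟨huB, hne⟩ := mem_boundaryBlue.1 hu
  have hd : (#(G.neighborFinset u \ B) : ℝ) ≠ 0 := by exact_mod_cast (card_pos.2 hne).ne'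
  calc (1 : ℝ) = ∑ _w ∈ G.neighborFinset u \ B, (#(G.neighborFinset u \ B) : ℝ)⁻¹ := by
        rw [sum_const, nsmul_eq_mul, mul_inv_cancel₀ hd]
    _ ≤ _ := sum_le_sum fun w hw =>
        inv_card_sdiff_le_forceProb huB (mem_neighborFinset_sdiff.1 hw).2
          (mem_neighborFinset_sdiff.1 hw).1

lemma two_le_sum_forceProb_of_disjoint (hu : u ∈ boundaryBlue G B) (hv : v ∈ boundaryBlue G B)
    (huv : Disjoint (G.neighborFinset u \ B) (G.neighborFinset v \ B)) :
    2 ≤ ∑ w ∈ Bᶜ, forceProb G B w := by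
  have hsub : (G.neighborFinset u \ B) ∪ (G.neighborFinset v \ B) ⊆ Bᶜ := by
    intro w hw
    rw [mem_compl]
    rcases mem_union.1 hw with h | h <;> exact (mem_neighborFinset_sdiff.1 h).2
  calc (2 : ℝ) ≤ ∑ w ∈ G.neighborFinset u \ B, forceProb G B w
        + ∑ w ∈ G.neighborFinset v \ B, forceProb G B w := by
        linarith [one_le_sum_forceProb_sdiff hu, one_le_sum_forceProb_sdiff hv]
    _ = _ := (sum_union huv).symm
    _ ≤ _ := sum_forceProb_le_of_subset hsub

variable (G B) in
/-- The expected number of forced vertices if only the vertices of `T` force, each one forcing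
each white neighbour with probability `1 / (number of its white neighbours)`. -/
noncomputable def partialForceSum (T : Finset V) : ℝ :=
  ∑ w ∈ Bᶜ, (1 - ∏ u ∈ T.filter (G.Adj · w), (1 - (#(G.neighborFinset u \ B) : ℝ)⁻¹))

lemma partialForceSum_empty : partialForceSum G B ∅ = 0 := by
  simp [partialForceSum]

lemma partialForceSum_le_sum_forceProb {T : Finset V} (hT : T ⊆ B) :
    partialForceSum G B T ≤ ∑ w ∈ Bᶜ, forceProb G B w :=
  sum_le_sum fun _ hw =>
    one_sub_prod_le_forceProb (mem_compl.1 hw) fun _ hu =>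
      mem_filter.2 ⟨hT (mem_filter.1 hu).1, (mem_filter.1 hu).2⟩

lemma partialForceSum_insert {T : Finset V} {a : V} (haT : a ∉ T)
    (ha : (G.neighborFinset a \ B).Nonempty) :
    1 + (1 - (#(G.neighborFinset a \ B) : ℝ)⁻¹) * partialForceSum G B T
      ≤ partialForceSum G B (insert a T) := by
  set x : V → ℝ := fun u => (#(G.neighborFinset u \ B) : ℝ)⁻¹ with hx
  have hx01 : ∀ u, 0 ≤ 1 - x u ∧ 1 - x u ≤ 1 := fun u =>
    ⟨sub_nonneg.2 (Nat.cast_inv_le_one _), sub_le_self _ (inv_nonneg.2 (Nat.cast_nonneg _))⟩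
  have hpoint : ∀ w, (if G.Adj a w then x a else 0)
      + (1 - x a) * (1 - ∏ u ∈ T.filter (G.Adj · w), (1 - x u))
      ≤ 1 - ∏ u ∈ (insert a T).filter (G.Adj · w), (1 - x u) := by
    intro w
    have hP : ∏ u ∈ T.filter (G.Adj · w), (1 - x u) ≤ 1 :=
      prod_le_one (fun u _ => (hx01 u).1) fun u _ => (hx01 u).2
    rw [filter_insert]
    split_ifs
    · rw [prod_insert fun h => haT (mem_filter.1 h).1]
      linarith
    · nlinarith [(hx01 a).1, (hx01 a).2]
  have hcount : ∑ w ∈ Bᶜ, (if G.Adj a w then x a else 0) = 1 := by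
    have hfilter : Bᶜ.filter (G.Adj a) = G.neighborFinset a \ B := by
      ext w
      simp [and_comm]
    have hd : (#(G.neighborFinset a \ B) : ℝ) ≠ 0 := by exact_mod_cast (card_pos.2 ha).ne'
    rw [← sum_filter, hfilter, sum_const, nsmul_eq_mul, hx, mul_inv_cancel₀ hd]
  calc 1 + (1 - x a) * partialForceSum G B T
      = ∑ w ∈ Bᶜ, ((if G.Adj a w then x a else 0)
          + (1 - x a) * (1 - ∏ u ∈ T.filter (G.Adj · w), (1 - x u))) := by
        rw [sum_add_distrib, hcount, ← mul_sum, partialForceSum]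
    _ ≤ partialForceSum G B (insert a T) := sum_le_sum fun w _ => hpoint w

lemma two_le_sum_forceProb_of_three {a b c : V} (ha : a ∈ boundaryBlue G B)
    (hb : b ∈ boundaryBlue G B) (hc : c ∈ boundaryBlue G B) (hab : a ≠ b) (hac : a ≠ c)
    (hbc : b ≠ c) (ha3 : 3 ≤ #(G.neighborFinset a \ B)) (hb2 : 2 ≤ #(G.neighborFinset b \ B)) :
    2 ≤ ∑ w ∈ Bᶜ, forceProb G B w := by
  obtain ⟨haB, ha⟩ := mem_boundaryBlue.1 ha
  obtain ⟨hbB, hb⟩ := mem_boundaryBlue.1 hb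
  obtain ⟨hcB, hc⟩ := mem_boundaryBlue.1 hc
  have hxa : (#(G.neighborFinset a \ B) : ℝ)⁻¹ ≤ 1 / 3 := by
    rw [one_div]; exact inv_anti₀ (by norm_num) (by exact_mod_cast ha3)
  have hxb : (#(G.neighborFinset b \ B) : ℝ)⁻¹ ≤ 1 / 2 := by
    rw [one_div]; exact inv_anti₀ (by norm_num) (by exact_mod_cast hb2)
  have hc1 : 1 ≤ partialForceSum G B {c} := by
    simpa [partialForceSum_empty] using partialForceSum_insert (notMem_empty c) hc
  have hbc1 := partialForceSum_insert (T := {c}) (by simpa using hbc) hb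
  have habc := partialForceSum_insert (T := {b, c}) (by simp [hab, hac]) ha
  have hsub : ({a, b, c} : Finset V) ⊆ B := by
    simp [insert_subset_iff, haB, hbB, hcB]
  have hbc2 : 3 / 2 ≤ partialForceSum G B {b, c} := by nlinarith
  have habc2 : 2 ≤ partialForceSum G B {a, b, c} := by nlinarith
  exact habc2.trans (partialForceSum_le_sum_forceProb hsub)

lemma boundaryWhite_subset_compl : boundaryWhite G B ⊆ Bᶜ := filter_subset _ _

lemma half_le_inv_card_sdiff (hw : w ∉ B) (huw : G.Adj u w)
    (hu2 : #(G.neighborFinset u \ B) ≤ 2) : 1 / 2 ≤ (#(G.neighborFinset u \ B) : ℝ)⁻¹ := by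
  have hpos : (0 : ℝ) < #(G.neighborFinset u \ B) := by
    exact_mod_cast card_pos.2 ⟨w, mem_neighborFinset_sdiff.2 ⟨huw, hw⟩⟩
  rw [one_div]
  exact inv_anti₀ hpos (by exact_mod_cast hu2)

lemma half_le_forceProb_of_mem_boundaryWhite
    (hle : ∀ u ∈ boundaryBlue G B, #(G.neighborFinset u \ B) ≤ 2) (hw : w ∈ boundaryWhite G B) :
    1 / 2 ≤ forceProb G B w := by
  obtain ⟨hwB, u, huB, huw⟩ := mem_boundaryWhite.1 hw
  exact (half_le_inv_card_sdiff hwB huw (hle u (mem_boundaryBlue_of_adj huB hwB huw))).trans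
    (inv_card_sdiff_le_forceProb huB hwB huw)

lemma three_quarters_le_forceProb (hu : u ∈ B) (hv : v ∈ B) (huv : u ≠ v) (hw : w ∉ B)
    (huw : G.Adj u w) (hvw : G.Adj v w) (hu2 : #(G.neighborFinset u \ B) ≤ 2)
    (hv2 : #(G.neighborFinset v \ B) ≤ 2) : 3 / 4 ≤ forceProb G B w := by
  have huv' : ({u, v} : Finset V) ⊆ B.filter (G.Adj · w) := by
    simp [insert_subset_iff, hu, hv, huw, hvw]
  have hforce := one_sub_prod_le_forceProb hw huv'
  rw [prod_pair huv] at hforce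
  nlinarith [half_le_inv_card_sdiff hw huw hu2, half_le_inv_card_sdiff hw hvw hv2,
    Nat.cast_inv_le_one (α := ℝ) #(G.neighborFinset u \ B),
    Nat.cast_inv_le_one (α := ℝ) #(G.neighborFinset v \ B)]

lemma two_le_sum_forceProb_of_card_sdiff_eq_one (hW : 3 ≤ #(boundaryWhite G B))
    (hle : ∀ u ∈ boundaryBlue G B, #(G.neighborFinset u \ B) ≤ 2) {s : V} (hs : s ∈ B)
    (hs1 : #(G.neighborFinset s \ B) = 1) : 2 ≤ ∑ w ∈ Bᶜ, forceProb G B w := by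
  obtain ⟨w₀, hw₀⟩ := card_eq_one.1 hs1
  have hw₀s : w₀ ∈ G.neighborFinset s \ B := hw₀ ▸ mem_singleton_self w₀
  obtain ⟨hsw₀, hw₀B⟩ := mem_neighborFinset_sdiff.1 hw₀s
  have hw₀W : w₀ ∈ boundaryWhite G B := mem_boundaryWhite_of_mem hs hw₀s
  have hone : 1 ≤ forceProb G B w₀ := by
    simpa [hs1] using inv_card_sdiff_le_forceProb hs hw₀B hsw₀
  have hrest : #((boundaryWhite G B).erase w₀) • (1 / 2 : ℝ)
      ≤ ∑ w ∈ (boundaryWhite G B).erase w₀, forceProb G B w :=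
    card_nsmul_le_sum _ _ _ fun w hw =>
      half_le_forceProb_of_mem_boundaryWhite hle (mem_of_mem_erase hw)
  have hcard : (2 : ℝ) ≤ #((boundaryWhite G B).erase w₀) := by
    rw [card_erase_of_mem hw₀W]
    exact_mod_cast (by omega : 2 ≤ #(boundaryWhite G B) - 1)
  rw [nsmul_eq_mul] at hrest
  calc (2 : ℝ) ≤ forceProb G B w₀ + ∑ w ∈ (boundaryWhite G B).erase w₀, forceProb G B w := by
        linarith
    _ = ∑ w ∈ boundaryWhite G B, forceProb G B w := add_sum_erase _ _ hw₀W
    _ ≤ _ := sum_forceProb_le_of_subset boundaryWhite_subset_compl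

lemma eq_of_card_filter_adj_le_one (hK : 3 ≤ #(boundaryBlue G B))
    (hW : #(boundaryWhite G B) = 3) (h2 : ∀ u ∈ boundaryBlue G B, #(G.neighborFinset u \ B) = 2)
    {y₁ y₂ : V} (hy₁ : y₁ ∈ boundaryWhite G B) (hy₂ : y₂ ∈ boundaryWhite G B)
    (h₁ : #(B.filter (G.Adj · y₁)) ≤ 1) (h₂ : #(B.filter (G.Adj · y₂)) ≤ 1) : y₁ = y₂ := by
  by_contra hne
  obtain ⟨u, huK, hu⟩ : ∃ u ∈ boundaryBlue G B,
      u ∉ B.filter (G.Adj · y₁) ∪ B.filter (G.Adj · y₂) := by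
    by_contra! h
    have := (card_le_card h).trans (card_union_le _ _)
    omega
  obtain ⟨huB, -⟩ := mem_boundaryBlue.1 huK
  have hsub : G.neighborFinset u \ B ⊆ ((boundaryWhite G B).erase y₁).erase y₂ := by
    intro y hy
    obtain ⟨huy, -⟩ := mem_neighborFinset_sdiff.1 hy
    refine mem_erase.2 ⟨?_, mem_erase.2 ⟨?_, mem_boundaryWhite_of_mem huB hy⟩⟩ <;>
      rintro rfl <;> simp [huB, huy] at hu
  have := card_le_card hsub
  rw [card_erase_of_mem (mem_erase.2 ⟨Ne.symm hne, hy₂⟩), card_erase_of_mem hy₁, hW,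
    h2 u huK] at this
  omega

lemma two_le_sum_forceProb_of_card_sdiff_eq_two (hK : 3 ≤ #(boundaryBlue G B))
    (hW : 3 ≤ #(boundaryWhite G B)) (h2 : ∀ u ∈ boundaryBlue G B, #(G.neighborFinset u \ B) = 2) :
    2 ≤ ∑ w ∈ Bᶜ, forceProb G B w := by
  have hle : ∀ u ∈ boundaryBlue G B, #(G.neighborFinset u \ B) ≤ 2 := fun u hu => (h2 u hu).le
  refine le_trans ?_ (sum_forceProb_le_of_subset (boundaryWhite_subset_compl (G := G)))
  rcases hW.eq_or_lt with hW3 | hW4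
  · set S := (boundaryWhite G B).filter fun y => #(B.filter (G.Adj · y)) ≤ 1 with hSdef
    have hS : #S ≤ 1 := card_le_one.2 fun y₁ hy₁ y₂ hy₂ =>
      eq_of_card_filter_adj_le_one hK hW3.symm h2 (mem_filter.1 hy₁).1 (mem_filter.1 hy₂).1
        (mem_filter.1 hy₁).2 (mem_filter.1 hy₂).2
    have hpoint : ∀ y ∈ boundaryWhite G B,
        3 / 4 - (if y ∈ S then 1 / 4 else 0) ≤ forceProb G B y := by
      intro y hy
      split_ifs with hyS
      · linarith [half_le_forceProb_of_mem_boundaryWhite hle hy]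
      · have hyB := (mem_boundaryWhite.1 hy).1
        obtain ⟨u, hu, v, hv, huv⟩ := one_lt_card.1 (by simpa [hSdef, hy] using hyS)
        obtain ⟨huB, huy⟩ := mem_filter.1 hu
        obtain ⟨hvB, hvy⟩ := mem_filter.1 hv
        simpa using three_quarters_le_forceProb huB hvB huv hyB huy hvy
          (hle u (mem_boundaryBlue_of_adj huB hyB huy)) (hle v (mem_boundaryBlue_of_adj hvB hyB hvy))
    have hSW : boundaryWhite G B ∩ S = S := inter_eq_right.2 (filter_subset _ _)
    have hS' : (#S : ℝ) ≤ 1 := by exact_mod_cast hS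
    calc (2 : ℝ) ≤ 3 / 4 * #(boundaryWhite G B) - 1 / 4 * #S := by
          rw [← hW3]; push_cast; linarith
      _ = ∑ y ∈ boundaryWhite G B, (3 / 4 - (if y ∈ S then 1 / 4 else 0)) := by
          rw [sum_sub_distrib, sum_ite_mem, hSW, sum_const, sum_const, nsmul_eq_mul,
            nsmul_eq_mul]
          ring
      _ ≤ _ := sum_le_sum hpoint
  · calc (2 : ℝ) ≤ #(boundaryWhite G B) • (1 / 2 : ℝ) := by
          rw [nsmul_eq_mul]
          have : (4 : ℝ) ≤ #(boundaryWhite G B) := by exact_mod_cast hW4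
          linarith
      _ ≤ _ := card_nsmul_le_sum _ _ _ fun w hw => half_le_forceProb_of_mem_boundaryWhite hle hw

lemma two_le_sum_forceProb_of_card_sdiff_le_two (hK : 3 ≤ #(boundaryBlue G B))
    (hW : 3 ≤ #(boundaryWhite G B)) (hle : ∀ u ∈ boundaryBlue G B, #(G.neighborFinset u \ B) ≤ 2) :
    2 ≤ ∑ w ∈ Bᶜ, forceProb G B w := by
  by_cases h1 : ∃ s ∈ boundaryBlue G B, #(G.neighborFinset s \ B) = 1
  · obtain ⟨s, hs, hs1⟩ := h1
    exact two_le_sum_forceProb_of_card_sdiff_eq_one hW hle (mem_boundaryBlue.1 hs).1 hs1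
  · push Not at h1
    refine two_le_sum_forceProb_of_card_sdiff_eq_two hK hW fun u hu => ?_
    have := card_pos.2 (mem_boundaryBlue.1 hu).2
    have := hle u hu
    have := h1 u hu
    omega

lemma exists_forall_adj_of_card_sdiff_eq_one {s : V} (hs1 : #(G.neighborFinset s \ B) = 1)
    (hmeet : ∀ v ∈ boundaryBlue G B,
      ¬Disjoint (G.neighborFinset v \ B) (G.neighborFinset s \ B)) :
    ∃ w ∉ B, ∀ v ∈ boundaryBlue G B, G.Adj v w := by
  obtain ⟨w, hw⟩ := card_eq_one.1 hs1
  have hws : w ∈ G.neighborFinset s \ B := hw ▸ mem_singleton_self w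
  refine ⟨w, (mem_neighborFinset_sdiff.1 hws).2, fun v hv => ?_⟩
  have hvw : w ∈ G.neighborFinset v \ B := by
    simpa [hw] using hmeet v hv
  exact (mem_neighborFinset_sdiff.1 hvw).1

end

/-- If at least 3 blue vertices have a white neighbor and at least 3 white vertices have
a blue neighbor, then either the expected number of vertices forced blue in one step of
probabilistic zero forcing is at least 2, or all but at most one of the blue vertices
with a white neighbor have exactly one white neighbor and there is a single white vertex
adjacent to all of them. -/
theorem expected_two_or_structure {V : Type*} [Fintype V] [DecidableEq V]
    (G : SimpleGraph V) [DecidableRel G.Adj] (B : Finset V)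
    (hk : 3 ≤ (B.filter (fun v => (G.neighborFinset v \ B).Nonempty)).card)
    (hl : 3 ≤ (Bᶜ.filter (fun w => (G.neighborFinset w ∩ B).Nonempty)).card) :
    2 ≤ ∑ v ∈ Bᶜ, forceProb G B v ∨
      ((∃ u₀, ∀ v ∈ B.filter (fun v => (G.neighborFinset v \ B).Nonempty),
          v ≠ u₀ → (G.neighborFinset v \ B).card = 1) ∧
        ∃ w ∉ B, ∀ v ∈ B.filter (fun v => (G.neighborFinset v \ B).Nonempty),
          G.Adj v w) := by
  change 3 ≤ #(boundaryBlue G B) at hk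
  change 3 ≤ #(boundaryWhite G B) at hl
  by_cases hle : ∀ u ∈ boundaryBlue G B, #(G.neighborFinset u \ B) ≤ 2
  · exact Or.inl (two_le_sum_forceProb_of_card_sdiff_le_two hk hl hle)
  push Not at hle
  obtain ⟨a, ha, ha3⟩ := hle
  by_cases hb : ∃ b ∈ boundaryBlue G B, b ≠ a ∧ 2 ≤ #(G.neighborFinset b \ B)
  · obtain ⟨b, hb, hba, hb2⟩ := hb
    obtain ⟨c, hc, hcb⟩ := exists_mem_ne (s := (boundaryBlue G B).erase a)
      (by rw [card_erase_of_mem ha]; omega) b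
    obtain ⟨hca, hc⟩ := mem_erase.1 hc
    exact Or.inl (two_le_sum_forceProb_of_three ha hb hc hba.symm hca.symm hcb.symm ha3 hb2)
  by_cases hdisj : ∃ u ∈ boundaryBlue G B, ∃ v ∈ boundaryBlue G B,
      Disjoint (G.neighborFinset u \ B) (G.neighborFinset v \ B)
  · obtain ⟨u, hu, v, hv, huv⟩ := hdisj
    exact Or.inl (two_le_sum_forceProb_of_disjoint hu hv huv)
  push Not at hb hdisj
  have hone : ∀ v ∈ boundaryBlue G B, v ≠ a → #(G.neighborFinset v \ B) = 1 := fun v hv hva => by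
    have := card_pos.2 (mem_boundaryBlue.1 hv).2
    have := hb v hv hva
    omega
  obtain ⟨s, hs, hsa⟩ := exists_mem_ne (by omega : 1 < #(boundaryBlue G B)) a
  exact Or.inr ⟨⟨a, hone⟩,
    exists_forall_adj_of_card_sdiff_eq_one (hone s hs hsa) fun v hv => hdisj v hv s hs⟩
end

section
/- For any connected graph G with n vertices and any nonempty subset S ⊆ V(G) with |S| = k, the expected propagation time satisfies ept(G, S) ≥ log₂ log₂ (2n) - log₂ log₂ (2k). -/
open Finset

/-! With `f x = log₂ log₂ (2x)`, the expected number of blue vertices after one step from a blue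
set `B` is at most `|B| + |B|² ≤ 2|B|²`, and `f (2x²) = f x + 1`. Since `f` is concave and
increasing on `[1, ∞)`, Jensen's inequality shows that `E f(|B_t|)` grows by at most
`P(τ > t)` per step, so `f n · P(τ ≤ t) ≤ E f(|B_t|) ≤ f k + ∑_{j<t} P(τ > j) ≤ f k + ept G S`;
let `t → ∞`. Connectivity is what makes `P(τ > t)` summable (every step from a proper blue set
makes progress with probability at least `1/n`), so that `ept` is the true expectation and not
the junk value of a divergent `tsum`. -/

open Filter Topology

namespace Finset

lemma one_sub_sum_le_prod_one_sub {ι : Type*} {s : Finset ι} {x : ι → ℝ}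
    (h0 : ∀ i ∈ s, 0 ≤ x i) (h1 : ∀ i ∈ s, x i ≤ 1) :
    1 - ∑ i ∈ s, x i ≤ ∏ i ∈ s, (1 - x i) := by
  classical
  induction s using Finset.induction_on with
  | empty => simp
  | insert a s ha ih =>
    rw [sum_insert ha, prod_insert ha]
    have hs := ih (fun i hi => h0 i (mem_insert_of_mem hi))
      fun i hi => h1 i (mem_insert_of_mem hi)
    have ha0 := h0 a (mem_insert_self a s)
    have ha1 := h1 a (mem_insert_self a s)
    have hsum : 0 ≤ ∑ i ∈ s, x i := sum_nonneg fun i hi => h0 i (mem_insert_of_mem hi)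
    nlinarith [mul_le_mul_of_nonneg_left hs (sub_nonneg.2 ha1), mul_nonneg ha0 hsum]

lemma prod_one_sub_le_one_sub_of_mem {ι : Type*} {s : Finset ι} {x : ι → ℝ} {j : ι}
    (hj : j ∈ s) (h0 : ∀ i ∈ s, 0 ≤ x i) (h1 : ∀ i ∈ s, x i ≤ 1) :
    ∏ i ∈ s, (1 - x i) ≤ 1 - x j := by
  classical
  rw [← mul_prod_erase s _ hj]
  exact mul_le_of_le_one_right (sub_nonneg.2 (h1 j hj))
    (prod_le_one (fun i hi => sub_nonneg.2 (h1 i (mem_of_mem_erase hi)))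
      (fun i hi => sub_le_self _ (h0 i (mem_of_mem_erase hi))))

lemma sum_powerset_prod_ite {ι R : Type*} [CommSemiring R] [DecidableEq ι] (s : Finset ι)
    (a b : ι → R) :
    ∑ T ∈ s.powerset, ∏ i ∈ s, (if i ∈ T then a i else b i) = ∏ i ∈ s, (a i + b i) := by
  rw [prod_add]
  refine sum_congr rfl fun T hT => ?_
  rw [prod_ite, filter_mem_eq_inter, inter_eq_right.2 (mem_powerset.1 hT), ← sdiff_eq_filter]

end Finset

lemma summable_of_le_mul_add {q h : ℕ → ℝ} {r : ℝ} (hq : ∀ t, 0 ≤ q t) (hh : ∀ t, 0 ≤ h t)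
    (hr : r < 1) (hsum : Summable h) (hstep : ∀ t, q (t + 1) ≤ r * q t + h t) : Summable q := by
  refine summable_of_sum_range_le hq (c := (q 0 + ∑' t, h t) / (1 - r)) fun T => ?_
  have hmono : ∑ t ∈ range T, q t ≤ ∑ t ∈ range (T + 1), q t :=
    sum_le_sum_of_subset_of_nonneg (range_subset_range.2 T.le_succ) fun t _ _ => hq t
  have hrec : ∑ t ∈ range (T + 1), q t ≤ q 0 + r * ∑ t ∈ range T, q t + ∑' t, h t := by
    have := sum_le_sum fun t (_ : t ∈ range T) => hstep t
    rw [sum_add_distrib, ← mul_sum] at this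
    rw [sum_range_succ']
    linarith [hsum.sum_le_tsum (range T) fun t _ => hh t]
  rw [le_div_iff₀ (sub_pos.2 hr)]
  linarith

namespace Real

lemma concaveOn_logb_Ioi {b : ℝ} (hb : 1 ≤ b) : ConcaveOn ℝ (Set.Ioi 0) (logb b) :=
  (strictConcaveOn_log_Ioi.concaveOn.smul (inv_nonneg.2 (log_nonneg hb))).congr fun x _ => by
    simp [logb, div_eq_inv_mul]

end Real

namespace ProbZeroForcing

variable {V : Type*} [Fintype V] [DecidableEq V] (G : SimpleGraph V) [DecidableRel G.Adj]

/-- `|N[u] ∩ B| / deg u`, with `|N[u] ∩ B| = |N(u) ∩ B| + 1` for blue `u`. -/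
noncomputable def forceRate (B : Finset V) (u : V) : ℝ :=
  (((G.neighborFinset u ∩ B).card + 1 : ℝ) / (G.degree u))

lemma forceProb_eq_one_sub_prod (B : Finset V) (v : V) :
    forceProb G B v = 1 - ∏ u ∈ B.filter (G.Adj · v), (1 - forceRate G B u) := rfl

lemma forceRate_nonneg (B : Finset V) (u : V) : 0 ≤ forceRate G B u := by
  unfold forceRate; positivity

lemma forceRate_le_one {B : Finset V} {u v : V} (hv : v ∉ B) (huv : G.Adj u v) :
    forceRate G B u ≤ 1 := by
  have hsub : G.neighborFinset u ∩ B ⊆ (G.neighborFinset u).erase v := fun w hw =>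
    mem_erase.2 ⟨fun h => hv (h ▸ (mem_inter.1 hw).2), (mem_inter.1 hw).1⟩
  have hcard := card_le_card hsub
  rw [card_erase_of_mem ((G.mem_neighborFinset u v).2 huv),
    G.card_neighborFinset_eq_degree] at hcard
  have hdeg : 0 < G.degree u := (G.degree_pos_iff_exists_adj u).2 ⟨v, huv⟩
  rw [forceRate, div_le_one (by exact_mod_cast hdeg)]
  exact_mod_cast (by omega : (G.neighborFinset u ∩ B).card + 1 ≤ G.degree u)

lemma inv_card_le_forceRate (B : Finset V) {u v : V} (huv : G.Adj u v) :
    1 / (Fintype.card V : ℝ) ≤ forceRate G B u := by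
  have hdeg : (0 : ℝ) < G.degree u := by
    exact_mod_cast (G.degree_pos_iff_exists_adj u).2 ⟨v, huv⟩
  calc 1 / (Fintype.card V : ℝ) ≤ 1 / G.degree u :=
        one_div_le_one_div_of_le hdeg (by exact_mod_cast (G.degree_lt_card_verts u).le)
    _ ≤ forceRate G B u :=
        div_le_div_of_nonneg_right (le_add_of_nonneg_left (Nat.cast_nonneg _)) hdeg.le

lemma degree_mul_forceRate_le {B : Finset V} {u : V} (hu : u ∈ B) :
    G.degree u * forceRate G B u ≤ B.card := by
  by_cases hdeg : (G.degree u : ℝ) = 0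
  · rw [hdeg, zero_mul]; positivity
  rw [forceRate, mul_div_cancel₀ _ hdeg]
  have hsub : G.neighborFinset u ∩ B ⊆ B.erase u := fun w hw =>
    mem_erase.2 ⟨fun h => G.notMem_neighborFinset_self u (h ▸ (mem_inter.1 hw).1),
      (mem_inter.1 hw).2⟩
  have hcard := card_le_card hsub
  rw [card_erase_of_mem hu] at hcard
  have hB := card_pos.2 ⟨u, hu⟩
  exact_mod_cast (by omega : (G.neighborFinset u ∩ B).card + 1 ≤ B.card)

lemma forceProb_nonneg {B : Finset V} {v : V} (hv : v ∉ B) : 0 ≤ forceProb G B v := by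
  rw [forceProb_eq_one_sub_prod, sub_nonneg]
  exact prod_le_one (fun u hu => sub_nonneg.2 (forceRate_le_one G hv (mem_filter.1 hu).2))
    fun u _ => sub_le_self _ (forceRate_nonneg G B u)

lemma forceProb_le_one {B : Finset V} {v : V} (hv : v ∉ B) : forceProb G B v ≤ 1 := by
  rw [forceProb_eq_one_sub_prod, sub_le_self_iff]
  exact prod_nonneg fun u hu => sub_nonneg.2 (forceRate_le_one G hv (mem_filter.1 hu).2)

lemma forceProb_le_sum_forceRate {B : Finset V} {v : V} (hv : v ∉ B) :
    forceProb G B v ≤ ∑ u ∈ B.filter (G.Adj · v), forceRate G B u := by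
  rw [forceProb_eq_one_sub_prod, sub_le_comm]
  exact one_sub_sum_le_prod_one_sub (fun u _ => forceRate_nonneg G B u)
    fun u hu => forceRate_le_one G hv (mem_filter.1 hu).2

lemma inv_card_le_forceProb {B : Finset V} {u v : V} (hu : u ∈ B) (hv : v ∉ B)
    (huv : G.Adj u v) : 1 / (Fintype.card V : ℝ) ≤ forceProb G B v := by
  rw [forceProb_eq_one_sub_prod, le_sub_comm]
  exact (prod_one_sub_le_one_sub_of_mem (mem_filter.2 ⟨hu, huv⟩)
    (fun w _ => forceRate_nonneg G B w) fun w hw => forceRate_le_one G hv (mem_filter.1 hw).2).trans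
    (sub_le_sub_left (inv_card_le_forceRate G B huv) 1)

lemma sum_forceProb_le_sq (B : Finset V) :
    ∑ v ∈ Bᶜ, forceProb G B v ≤ (B.card : ℝ) ^ 2 := calc
  ∑ v ∈ Bᶜ, forceProb G B v ≤ ∑ v ∈ Bᶜ, ∑ u ∈ B.filter (G.Adj · v), forceRate G B u :=
      sum_le_sum fun v hv => forceProb_le_sum_forceRate G (mem_compl.1 hv)
  _ = ∑ u ∈ B, ∑ v ∈ Bᶜ.filter (G.Adj u), forceRate G B u := by
      simp only [sum_filter]; exact sum_comm
  _ ≤ ∑ u ∈ B, G.degree u * forceRate G B u := by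
      refine sum_le_sum fun u _ => ?_
      rw [sum_const, nsmul_eq_mul, ← G.card_neighborFinset_eq_degree]
      gcongr
      · exact forceRate_nonneg G B u
      · exact fun w hw => (G.mem_neighborFinset u w).2 (mem_filter.1 hw).2
  _ ≤ ∑ _u ∈ B, (B.card : ℝ) := sum_le_sum fun u hu => degree_mul_forceRate_le G hu
  _ = (B.card : ℝ) ^ 2 := by rw [sum_const, nsmul_eq_mul, sq]


lemma stepMass_of_subset {B T : Finset V} (hT : T ⊆ Bᶜ) :
    stepMass G B T = ∏ v ∈ Bᶜ, (if v ∈ T then forceProb G B v else 1 - forceProb G B v) :=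
  if_pos hT

lemma stepMass_nonneg (B T : Finset V) : 0 ≤ stepMass G B T := by
  unfold stepMass
  split_ifs
  · refine prod_nonneg fun v hv => ?_
    split_ifs
    · exact forceProb_nonneg G (mem_compl.1 hv)
    · exact sub_nonneg.2 (forceProb_le_one G (mem_compl.1 hv))
  · rfl

lemma sum_stepMass (B : Finset V) : ∑ T ∈ Bᶜ.powerset, stepMass G B T = 1 := by
  rw [sum_congr rfl fun T hT => stepMass_of_subset G (mem_powerset.1 hT), sum_powerset_prod_ite]
  simp

lemma sum_stepMass_filter_mem {B : Finset V} {v : V} (hv : v ∈ Bᶜ) :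
    ∑ T ∈ Bᶜ.powerset.filter (v ∈ ·), stepMass G B T = forceProb G B v := by
  set p := forceProb G B
  -- the event `v ∈ T` is absorbed into the product by giving `v` the weight `0` when `v ∉ T`
  have hevent : ∀ T ∈ Bᶜ.powerset, (if v ∈ T then stepMass G B T else 0) =
      ∏ w ∈ Bᶜ, (if w ∈ T then p w else if w = v then 0 else 1 - p w) := by
    intro T hT
    rw [stepMass_of_subset G (mem_powerset.1 hT)]
    split_ifs with hvT
    · exact prod_congr rfl fun w _ => by
        split_ifs with hwT hwv
        · rfl
        · exact absurd (hwv ▸ hvT) hwT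
        · rfl
    · exact (prod_eq_zero hv (by simp [hvT])).symm
  rw [sum_filter, sum_congr rfl hevent, sum_powerset_prod_ite]
  calc ∏ w ∈ Bᶜ, (p w + if w = v then 0 else 1 - p w) = ∏ w ∈ Bᶜ, if w = v then p w else 1 :=
        prod_congr rfl fun w _ => by split_ifs <;> ring
    _ = p v := by rw [prod_ite_eq' _ _ _, if_pos hv]

lemma sum_stepMass_mul_card (B : Finset V) :
    ∑ T ∈ Bᶜ.powerset, stepMass G B T * T.card = ∑ v ∈ Bᶜ, forceProb G B v := calc
  ∑ T ∈ Bᶜ.powerset, stepMass G B T * T.card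
      = ∑ T ∈ Bᶜ.powerset, ∑ v ∈ Bᶜ.filter (· ∈ T), stepMass G B T := by
        refine sum_congr rfl fun T hT => ?_
        rw [sum_const, nsmul_eq_mul, mul_comm, filter_mem_eq_inter,
          inter_eq_right.2 (mem_powerset.1 hT)]
  _ = ∑ v ∈ Bᶜ, ∑ T ∈ Bᶜ.powerset.filter (v ∈ ·), stepMass G B T := by
        simp only [sum_filter]; exact sum_comm
  _ = ∑ v ∈ Bᶜ, forceProb G B v := sum_congr rfl fun v hv => sum_stepMass_filter_mem G hv

lemma stepMass_empty_le (hG : G.Connected) {B : Finset V} (hB : B.Nonempty) (hBu : B ≠ univ) :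
    stepMass G B ∅ ≤ 1 - 1 / (Fintype.card V : ℝ) := by
  obtain ⟨x, hx⟩ := hB
  obtain ⟨y, hy⟩ : ∃ y, y ∉ B := by simpa [eq_univ_iff_forall] using hBu
  obtain ⟨d, -, hd, hd'⟩ := (hG.preconnected x y).some.exists_boundary_dart (B : Set V) hx hy
  rw [stepMass_of_subset G (empty_subset _)]
  simp only [notMem_empty, if_false]
  calc ∏ w ∈ Bᶜ, (1 - forceProb G B w) ≤ 1 - forceProb G B d.snd :=
        prod_one_sub_le_one_sub_of_mem (mem_compl.2 hd')
          (fun w hw => forceProb_nonneg G (mem_compl.1 hw))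
          fun w hw => forceProb_le_one G (mem_compl.1 hw)
    _ ≤ 1 - 1 / (Fintype.card V : ℝ) :=
        sub_le_sub_left (inv_card_le_forceProb G hd hd' d.adj) 1


/-- `E[φ B₁]` for the process started from `B₀ = B`. -/
noncomputable def stepExpect (φ : Finset V → ℝ) (B : Finset V) : ℝ :=
  ∑ T ∈ Bᶜ.powerset, stepMass G B T * φ (B ∪ T)

lemma probAllBlue_succ (t : ℕ) (B : Finset V) :
    probAllBlue G (t + 1) B = stepExpect G (probAllBlue G t) B := rfl

lemma stepExpect_mono {φ ψ : Finset V → ℝ} {B : Finset V} (h : ∀ C, B ⊆ C → φ C ≤ ψ C) :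
    stepExpect G φ B ≤ stepExpect G ψ B :=
  sum_le_sum fun T _ => mul_le_mul_of_nonneg_left (h _ subset_union_left) (stepMass_nonneg G B T)

lemma stepExpect_const (c : ℝ) (B : Finset V) : stepExpect G (fun _ => c) B = c := by
  rw [stepExpect, ← sum_mul, sum_stepMass, one_mul]

lemma stepExpect_add (φ ψ : Finset V → ℝ) (B : Finset V) :
    stepExpect G (fun C => φ C + ψ C) B = stepExpect G φ B + stepExpect G ψ B := by
  simp only [stepExpect, mul_add, sum_add_distrib]

lemma stepExpect_sub (φ ψ : Finset V → ℝ) (B : Finset V) :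
    stepExpect G (fun C => φ C - ψ C) B = stepExpect G φ B - stepExpect G ψ B := by
  simp only [stepExpect, mul_sub, sum_sub_distrib]

lemma stepExpect_const_mul (c : ℝ) (φ : Finset V → ℝ) (B : Finset V) :
    stepExpect G (fun C => c * φ C) B = c * stepExpect G φ B := by
  simp only [stepExpect, mul_sum, mul_left_comm]

lemma stepExpect_univ (φ : Finset V → ℝ) : stepExpect G φ univ = φ univ := by
  rw [stepExpect, compl_univ, powerset_empty, sum_singleton, union_empty,
    stepMass_of_subset G (empty_subset _), compl_univ, prod_empty, one_mul]

lemma stepExpect_eq_add_sum_erase (φ : Finset V → ℝ) (B : Finset V) :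
    stepExpect G φ B =
      stepMass G B ∅ * φ B + ∑ T ∈ Bᶜ.powerset.erase ∅, stepMass G B T * φ (B ∪ T) := by
  rw [stepExpect, ← add_sum_erase _ _ (empty_mem_powerset _), union_empty]

lemma stepExpect_card_le (B : Finset V) :
    stepExpect G (fun C => (C.card : ℝ)) B ≤ B.card + (B.card : ℝ) ^ 2 := calc
  stepExpect G (fun C => (C.card : ℝ)) B
      = ∑ T ∈ Bᶜ.powerset, (stepMass G B T * B.card + stepMass G B T * T.card) := by
        refine sum_congr rfl fun T hT => ?_
        have hdisj : Disjoint B T :=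
          disjoint_right.2 fun a haT haB => mem_compl.1 (mem_powerset.1 hT haT) haB
        simp only [card_union_of_disjoint hdisj, Nat.cast_add, mul_add]
  _ = B.card + ∑ v ∈ Bᶜ, forceProb G B v := by
        rw [sum_add_distrib, ← sum_mul, sum_stepMass, one_mul, sum_stepMass_mul_card]
  _ ≤ B.card + (B.card : ℝ) ^ 2 := add_le_add_right (sum_forceProb_le_sq G B) _

lemma probAllBlue_le_one : ∀ (t : ℕ) (B : Finset V), probAllBlue G t B ≤ 1
  | 0, B => by rw [probAllBlue]; split_ifs <;> norm_num
  | t + 1, B => by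
    rw [probAllBlue_succ, ← stepExpect_const G 1 B]
    exact stepExpect_mono G fun C _ => probAllBlue_le_one t C

lemma probAllBlue_univ : ∀ t : ℕ, probAllBlue G t (univ : Finset V) = 1
  | 0 => if_pos rfl
  | t + 1 => by rw [probAllBlue_succ, stepExpect_univ, probAllBlue_univ t]

lemma one_sub_probAllBlue_succ (t : ℕ) (B : Finset V) :
    1 - probAllBlue G (t + 1) B = stepExpect G (fun C => 1 - probAllBlue G t C) B := by
  rw [stepExpect_sub, stepExpect_const, probAllBlue_succ]

lemma summable_one_sub_probAllBlue (hG : G.Connected) {B : Finset V} (hB : B.Nonempty) :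
    Summable fun t => 1 - probAllBlue G t B := by
  induction hm : Bᶜ.card using Nat.strong_induction_on generalizing B with
  | _ m ih =>
  by_cases hBu : B = univ
  · subst hBu
    simp [probAllBlue_univ]
  have hr : stepMass G B ∅ < 1 := (stepMass_empty_le G hG hB hBu).trans_lt
    (sub_lt_self 1 (one_div_pos.2 (by exact_mod_cast Fintype.card_pos_iff.2 ⟨hB.choose⟩)))
  refine summable_of_le_mul_add (fun t => sub_nonneg.2 (probAllBlue_le_one G t B))
    (fun t => sum_nonneg fun T _ =>
      mul_nonneg (stepMass_nonneg G B T) (sub_nonneg.2 (probAllBlue_le_one G t _)))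
    hr (summable_sum fun T hT => (ih _ ?_ (hB.mono subset_union_left) rfl).mul_left _)
    fun t => (one_sub_probAllBlue_succ G t B).trans (stepExpect_eq_add_sum_erase G _ B) |>.le
  obtain ⟨hT, hTB⟩ := mem_erase.1 hT
  obtain ⟨x, hx⟩ := nonempty_iff_ne_empty.2 hT
  rw [← hm]
  refine card_lt_card ((ssubset_iff_of_subset (compl_subset_compl.2 subset_union_left)).2
    ⟨x, mem_powerset.1 hTB hx, by simp [hx]⟩)


noncomputable def potential (x : ℝ) : ℝ := Real.logb 2 (Real.logb 2 (2 * x))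

lemma one_le_logb_two_mul {x : ℝ} (hx : 1 ≤ x) : 1 ≤ Real.logb 2 (2 * x) := by
  rw [← Real.logb_self_eq_one one_lt_two]
  exact Real.logb_le_logb_of_le one_lt_two two_pos (by linarith)

lemma potential_nonneg {x : ℝ} (hx : 1 ≤ x) : 0 ≤ potential x :=
  Real.logb_nonneg one_lt_two (one_le_logb_two_mul hx)

lemma monotoneOn_potential : MonotoneOn potential (Set.Ici 1) := fun x hx y _ hxy =>
  Real.logb_le_logb_of_le one_lt_two (zero_lt_one.trans_le (one_le_logb_two_mul hx))
    (Real.logb_le_logb_of_le one_lt_two (by linarith [Set.mem_Ici.1 hx]) (by linarith))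

lemma concaveOn_potential : ConcaveOn ℝ (Set.Ici 1) potential := by
  have hlogb := Real.concaveOn_logb_Ioi one_le_two
  refine ⟨convex_Ici 1, fun x hx y hy a b ha hb hab => ?_⟩
  have hx1 : 1 ≤ x := hx
  have hy1 : 1 ≤ y := hy
  have hLx := one_le_logb_two_mul hx1
  have hLy := one_le_logb_two_mul hy1
  have hinner : a * Real.logb 2 (2 * x) + b * Real.logb 2 (2 * y) ≤
      Real.logb 2 (2 * (a * x + b * y)) := by
    have := hlogb.2 (Set.mem_Ioi.2 (by linarith : (0 : ℝ) < 2 * x))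
      (Set.mem_Ioi.2 (by linarith : (0 : ℝ) < 2 * y)) ha hb hab
    rwa [show 2 * (a * x + b * y) = a * (2 * x) + b * (2 * y) by ring]
  calc a • potential x + b • potential y
      ≤ Real.logb 2 (a • Real.logb 2 (2 * x) + b • Real.logb 2 (2 * y)) :=
        hlogb.2 (Set.mem_Ioi.2 (by linarith)) (Set.mem_Ioi.2 (by linarith)) ha hb hab
    _ ≤ potential (a • x + b • y) := by
        simp only [smul_eq_mul] at hinner ⊢
        exact Real.logb_le_logb_of_le one_lt_two (by nlinarith) hinner

lemma potential_two_mul_sq {x : ℝ} (hx : 1 ≤ x) : potential (2 * x ^ 2) = potential x + 1 := by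
  have hL := one_le_logb_two_mul hx
  rw [potential, potential, show 2 * (2 * x ^ 2) = (2 * x) ^ 2 by ring, Real.logb_pow,
    Nat.cast_ofNat, Real.logb_mul two_ne_zero (by positivity),
    Real.logb_self_eq_one one_lt_two, add_comm]

lemma stepExpect_potential_le {B : Finset V} (hB : B.Nonempty) :
    stepExpect G (fun C => potential C.card) B ≤ potential B.card + 1 := by
  have hB1 : (1 : ℝ) ≤ B.card := by exact_mod_cast hB.card_pos
  have hmem : ∀ T ∈ Bᶜ.powerset, ((B ∪ T).card : ℝ) ∈ Set.Ici 1 := fun T _ =>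
    hB1.trans (by exact_mod_cast card_le_card subset_union_left)
  have hE : (1 : ℝ) ≤ stepExpect G (fun C => (C.card : ℝ)) B := by
    rw [← stepExpect_const G 1 B]
    exact stepExpect_mono G fun C hC => hB1.trans (by exact_mod_cast card_le_card hC)
  calc stepExpect G (fun C => potential C.card) B
      ≤ potential (stepExpect G (fun C => (C.card : ℝ)) B) :=
        concaveOn_potential.le_map_sum (fun T _ => stepMass_nonneg G B T) (sum_stepMass G B) hmem
    _ ≤ potential (2 * (B.card : ℝ) ^ 2) :=
        monotoneOn_potential hE (by simp only [Set.mem_Ici]; nlinarith)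
          ((stepExpect_card_le G B).trans (by nlinarith))
    _ = potential B.card + 1 := potential_two_mul_sq hB1

noncomputable def expectedPotential : ℕ → Finset V → ℝ
  | 0, B => potential B.card
  | t + 1, B => stepExpect G (expectedPotential t) B

lemma expectedPotential_succ_le : ∀ (t : ℕ) {B : Finset V}, B.Nonempty →
    expectedPotential G (t + 1) B ≤ expectedPotential G t B + (1 - probAllBlue G t B)
  | 0, B, hB => by
    by_cases hBu : B = univ
    · subst hBu
      simp [expectedPotential, stepExpect_univ, probAllBlue]
    · rw [probAllBlue, if_neg hBu, sub_zero]
      exact stepExpect_potential_le G hB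
  | t + 1, B, hB => calc
    expectedPotential G (t + 2) B
        ≤ stepExpect G (fun C => expectedPotential G t C + (1 - probAllBlue G t C)) B :=
          stepExpect_mono G fun C hC => expectedPotential_succ_le t (hB.mono hC)
    _ = expectedPotential G (t + 1) B + (1 - probAllBlue G (t + 1) B) := by
          rw [stepExpect_add, ← one_sub_probAllBlue_succ]; rfl

lemma expectedPotential_le {B : Finset V} (hB : B.Nonempty) (t : ℕ) :
    expectedPotential G t B ≤ potential B.card + ∑ j ∈ range t, (1 - probAllBlue G j B) := by
  induction t with
  | zero => simp [expectedPotential]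
  | succ t ih =>
    rw [sum_range_succ]
    linarith [expectedPotential_succ_le G t hB]

lemma potential_card_mul_probAllBlue_le : ∀ (t : ℕ) {B : Finset V}, B.Nonempty →
    potential (Fintype.card V) * probAllBlue G t B ≤ expectedPotential G t B
  | 0, B, hB => by
    by_cases hBu : B = univ
    · subst hBu
      simp [probAllBlue, expectedPotential]
    · rw [probAllBlue, if_neg hBu, mul_zero]
      exact potential_nonneg (by exact_mod_cast hB.card_pos)
  | t + 1, B, hB => by
    rw [probAllBlue_succ, ← stepExpect_const_mul]
    exact stepExpect_mono G fun C hC => potential_card_mul_probAllBlue_le t (hB.mono hC)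

end ProbZeroForcing

open ProbZeroForcing

/-- Lower bound on expected propagation time: for a connected graph `G` on `n` vertices
and nonempty blue set `S` with `|S| = k`,
`ept(G,S) ≥ log₂ log₂ (2n) - log₂ log₂ (2k)`. -/
theorem ept_lower_bound {V : Type*} [Fintype V] [DecidableEq V]
    (G : SimpleGraph V) [DecidableRel G.Adj] (hG : G.Connected)
    (S : Finset V) (hS : S.Nonempty) (k : ℕ) (hk : S.card = k) :
    Real.logb 2 (Real.logb 2 (2 * (Fintype.card V : ℝ))) -
        Real.logb 2 (Real.logb 2 (2 * (k : ℝ))) ≤ ept G S := by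
  subst hk
  have hsum := summable_one_sub_probAllBlue G hG hS
  have hlim : Tendsto (fun t => potential (Fintype.card V) * probAllBlue G t S) atTop
      (𝓝 (potential (Fintype.card V))) := by
    simpa using (hsum.tendsto_atTop_zero.const_sub 1).const_mul (potential (Fintype.card V))
  have hbound : ∀ t, potential (Fintype.card V) * probAllBlue G t S ≤
      potential S.card + ept G S := fun t =>
    (potential_card_mul_probAllBlue_le G t hS).trans <| (expectedPotential_le G hS t).trans <|
      add_le_add_right (hsum.sum_le_tsum _ fun j _ => sub_nonneg.2 (probAllBlue_le_one G j S)) _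
  exact sub_le_iff_le_add'.2 (le_of_tendsto' hlim hbound)
end
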